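/- arXiv:1808.01221 — 8 statements merged into one kernel-verified Lean document; each statement's English description precedes it below -/
import Mathlib

section
/- Let $\alpha \in \mathbb{Z}^n$ and let $\pi_\alpha \in S_n$ be the unique permutation such that for all $i < j$: $\pi_\alpha^{-1}(i) < \pi_\alpha^{-1}(j)$ if and only if $|\alpha_i| > |\alpha_j|$ or $0 \le \alpha_i = \alpha_j$ or $0 \le \alpha_i = -\alpha_j$. Let $\sigma_\alpha := (\mathrm{sgn}(\alpha_1), \ldots, \mathrm{sgn}(\alpha_n)) \in \{\pm1\}^n$ where $\mathrm{sgn}(a) = 1$ if $a \ge 0$ and $-1$ if $a < 0$. Then $w_\alpha := \sigma_\alpha \pi_\alpha$ is the unique element of minimal length in $W_n$ with $w_\alpha^{-1}\alpha = \alpha^+$, where $\alpha^+$ is the unique partition in the $W_n$-orbit of $\alpha$. -/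
noncomputable section

/-- `l ∈ ℤⁿ` is a partition: weakly decreasing and nonnegative. -/
def IsPartition {n : ℕ} (l : Fin n → ℤ) : Prop :=
  (∀ i j : Fin n, i ≤ j → l j ≤ l i) ∧ ∀ i, 0 ≤ l i

/-- The action of `σπ ∈ Wₙ = {±1}ⁿ ⋊ Sₙ` on `ℤⁿ`: `(σπ α)_j = σ_j α_{π⁻¹(j)}`. -/
def actZ {n : ℕ} (ε : Fin n → Bool) (π : Equiv.Perm (Fin n)) (α : Fin n → ℤ) : Fin n → ℤ :=
  fun j => (if ε j then -1 else 1) * α (π.symm j)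

/-- The simple reflection `s_j` of type `Bₙ` acting on `ℤⁿ`:
for `j+1 < n` it swaps coordinates `j` and `j+1`, and for `j` the last index it
negates the last coordinate. -/
def sjZ {n : ℕ} (j : Fin n) (α : Fin n → ℤ) : Fin n → ℤ :=
  if h : (j : ℕ) + 1 < n then α ∘ (Equiv.swap j ⟨(j : ℕ) + 1, h⟩)
  else Function.update α j (-(α j))

/-- `w : ℤⁿ → ℤⁿ` is expressible as a word of length `r` in the simple reflections. -/
def IsWord {n : ℕ} (w : (Fin n → ℤ) → (Fin n → ℤ)) (r : ℕ) : Prop :=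
  ∃ L : List (Fin n), L.length = r ∧ w = (L.map (fun j => sjZ j)).foldr (· ∘ ·) id

/-- The length of `w ∈ Wₙ`: the minimal length of a word in the simple reflections. -/
def lenW {n : ℕ} (w : (Fin n → ℤ) → (Fin n → ℤ)) : ℕ := sInf {r | IsWord w r}

/-- `π` is the Sahi permutation `π_α` of `α`: for `i < j`,
`π⁻¹(i) < π⁻¹(j)` iff `|α_i| > |α_j|` or `0 ≤ α_i = α_j` or `0 ≤ α_i = -α_j`. -/
def SahiPerm {n : ℕ} (α : Fin n → ℤ) (π : Equiv.Perm (Fin n)) : Prop :=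
  ∀ i j : Fin n, i < j →
    (π.symm i < π.symm j ↔
      ((α j).natAbs < (α i).natAbs ∨ (0 ≤ α i ∧ (α i = α j ∨ α i = -α j))))

/-!
An element `w` of `Wₙ` is determined by its window `w (1, …, n)`, a vector of signed values
`±1, …, ±n`, and its length is an inversion count of the window (`invCount`) for the order
`1 < ⋯ < n < -n < ⋯ < -1`: each simple reflection changes this count by `±1`, lowering it exactly
at a descent of the window.

Starting from any `v` with `v α = α⁺`, replace `v` by `s_j v` as long as its window has a descent
at some `s_j` fixing `α⁺`; this preserves `v α = α⁺` and shortens `v`. Once no such descent is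
left, the window increases for the key `(-α⁺_j, rank)`. Since `α⁺ ≥ 0`, this fixes the signs of
`v`, and its permutation must list the positions in the order that defines `π_α`: so `v = w_α⁻¹`.
Hence every other solution is strictly longer than `w_α⁻¹`. For `α = 0` the same argument shows
that the identity is the only element without descents, which yields words of length `invCount`.
-/

section

variable {n : ℕ} def IsSignedPerm (w : (Fin n → ℤ) → Fin n → ℤ) : Prop :=
  ∃ (ε : Fin n → Bool) (π : Equiv.Perm (Fin n)), w = actZ ε π

theorem actZ_comp_actZ (ε₁ ε₂ : Fin n → Bool) (π₁ π₂ : Equiv.Perm (Fin n)) :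
    actZ ε₁ π₁ ∘ actZ ε₂ π₂ = actZ (fun j => xor (ε₁ j) (ε₂ (π₁.symm j))) (π₁ * π₂) := by
  funext α j
  simp only [Function.comp_apply, actZ]
  rw [show (π₁ * π₂).symm j = π₂.symm (π₁.symm j) from rfl]
  rcases Bool.eq_false_or_eq_true (ε₁ j) with h₁ | h₁ <;>
    rcases Bool.eq_false_or_eq_true (ε₂ (π₁.symm j)) with h₂ | h₂ <;> simp [h₁, h₂]

theorem actZ_comp_actZ_symm (ε : Fin n → Bool) (π : Equiv.Perm (Fin n)) :
    actZ ε π ∘ actZ (fun j => ε (π j)) π.symm = id := by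
  funext α j
  simp only [Function.comp_apply, actZ, Equiv.symm_symm, Equiv.apply_symm_apply, id]
  cases ε j <;> simp

theorem actZ_symm_comp_actZ (ε : Fin n → Bool) (π : Equiv.Perm (Fin n)) :
    actZ (fun j => ε (π j)) π.symm ∘ actZ ε π = id := by
  simpa using actZ_comp_actZ_symm (fun j => ε (π j)) π.symm

theorem actZ_false_one : actZ (fun _ => false) 1 = (id : (Fin n → ℤ) → Fin n → ℤ) := by
  funext α j
  simp [actZ, pull_end]

theorem isSignedPerm_id : IsSignedPerm (n := n) id := ⟨_, _, actZ_false_one.symm⟩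

theorem IsSignedPerm.comp (hv : IsSignedPerm v) (hw : IsSignedPerm w) :
    IsSignedPerm (v ∘ w) := by
  obtain ⟨ε₁, π₁, rfl⟩ := hv
  obtain ⟨ε₂, π₂, rfl⟩ := hw
  exact ⟨_, _, actZ_comp_actZ ε₁ ε₂ π₁ π₂⟩

theorem IsSignedPerm.exists_inverse (hw : IsSignedPerm w) :
    ∃ v, IsSignedPerm v ∧ w ∘ v = id ∧ v ∘ w = id := by
  obtain ⟨ε, π, rfl⟩ := hw
  exact ⟨_, ⟨_, _, rfl⟩, actZ_comp_actZ_symm ε π, actZ_symm_comp_actZ ε π⟩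

theorem IsSignedPerm.map_zero (hw : IsSignedPerm w) : w 0 = 0 := by
  obtain ⟨ε, π, rfl⟩ := hw
  funext j
  simp [actZ]

theorem isSignedPerm_sjZ (j : Fin n) : IsSignedPerm (sjZ j) := by
  by_cases h : (j : ℕ) + 1 < n
  · refine ⟨fun _ => false, Equiv.swap j ⟨j + 1, h⟩, ?_⟩
    funext α m
    simp [sjZ, h, actZ, Equiv.symm_swap]
  · refine ⟨fun m => decide (m = j), 1, ?_⟩
    funext α m
    by_cases hm : m = j
    · subst hm; simp [sjZ, h, actZ, pull_end]
    · simp [sjZ, h, actZ, hm, pull_end]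

theorem sjZ_sjZ (j : Fin n) (x : Fin n → ℤ) : sjZ j (sjZ j x) = x := by
  by_cases h : (j : ℕ) + 1 < n
  · funext m
    simp [sjZ, h]
  · funext m
    by_cases hm : m = j
    · subst hm; simp [sjZ, h]
    · simp [sjZ, h, Function.update_of_ne hm]

def word (L : List (Fin n)) : (Fin n → ℤ) → Fin n → ℤ :=
  (L.map fun j => sjZ j).foldr (· ∘ ·) id

@[simp] theorem word_nil : word ([] : List (Fin n)) = id := rfl

@[simp] theorem word_cons (j : Fin n) (L : List (Fin n)) : word (j :: L) = sjZ j ∘ word L := rfl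

theorem isSignedPerm_word (L : List (Fin n)) : IsSignedPerm (word L) := by
  induction L with
  | nil => exact isSignedPerm_id
  | cons j L ih => exact (isSignedPerm_sjZ j).comp ih

theorem word_append (L₁ L₂ : List (Fin n)) : word (L₁ ++ L₂) = word L₁ ∘ word L₂ := by
  induction L₁ with
  | nil => rfl
  | cons j L ih => rw [List.cons_append, word_cons, word_cons, ih, Function.comp_assoc]

theorem word_reverse_comp_word (L : List (Fin n)) : word L.reverse ∘ word L = id := by
  induction L with
  | nil => rfl
  | cons j L ih =>
    funext x
    simpa [word_append, sjZ_sjZ] using congrFun ih x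

theorem IsWord.isSignedPerm {r : ℕ} (h : IsWord w r) : IsSignedPerm w := by
  obtain ⟨L, -, rfl⟩ := h
  exact isSignedPerm_word L

theorem IsWord.of_comp_eq_id {r : ℕ} (h : IsWord w r) (hwv : w ∘ v = id) : IsWord v r := by
  obtain ⟨L, rfl, rfl⟩ := h
  refine ⟨L.reverse, L.length_reverse, ?_⟩
  change word L ∘ v = id at hwv
  change v = word L.reverse
  rw [← Function.comp_id (word L.reverse), ← hwv, ← Function.comp_assoc,
    word_reverse_comp_word, Function.id_comp]

theorem lenW_eq_of_comp_eq_id (hwv : w ∘ v = id) (hvw : v ∘ w = id) : lenW w = lenW v := by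
  unfold lenW
  congr 1
  ext r
  exact ⟨fun h => IsWord.of_comp_eq_id h hwv, fun h => IsWord.of_comp_eq_id h hvw⟩

def idWindow (n : ℕ) : Fin n → ℤ := fun k => (k : ℤ) + 1

/-- The position of a nonzero `a ∈ [-n, n]` in the order `1 < 2 < ⋯ < n < -n < ⋯ < -1`. -/
def signedRank (n : ℕ) (a : ℤ) : ℤ := if 0 < a then a else 2 * n + 1 + a

def IsSignedPermVec (n : ℕ) (u : Fin n → ℤ) : Prop :=
  (∀ j, u j ≠ 0 ∧ (u j).natAbs ≤ n) ∧ Function.Injective fun j => (u j).natAbs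

theorem actZ_idWindow_apply (ε : Fin n → Bool) (π : Equiv.Perm (Fin n)) (j : Fin n) :
    actZ ε π (idWindow n) j = (if ε j then -1 else 1) * ((π.symm j : ℤ) + 1) := rfl

theorem IsSignedPerm.isSignedPermVec (hw : IsSignedPerm w) :
    IsSignedPermVec n (w (idWindow n)) := by
  obtain ⟨ε, π, rfl⟩ := hw
  have habs : ∀ j, (actZ ε π (idWindow n) j).natAbs = (π.symm j : ℕ) + 1 := fun j => by
    rw [actZ_idWindow_apply]; cases ε j <;> simp <;> omega
  refine ⟨fun j => ⟨?_, ?_⟩, fun i j hij => ?_⟩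
  · rw [← Int.natAbs_ne_zero, habs]; omega
  · rw [habs]; exact (π.symm j).isLt
  · simp only [habs, Nat.add_right_cancel_iff, Fin.val_inj] at hij
    exact π.symm.injective hij

theorem signedRank_neg_lt_comm {a b : ℤ} (ha : a ≠ 0 ∧ a.natAbs ≤ n)
    (hb : b ≠ 0 ∧ b.natAbs ≤ n) :
    signedRank n (-b) < signedRank n a ↔ signedRank n (-a) < signedRank n b := by
  unfold signedRank; split_ifs <;> omega

theorem signedRank_of_pos {a : ℤ} (h : 0 < a) : signedRank n a = a := if_pos h

theorem signedRank_of_nonpos {a : ℤ} (h : a ≤ 0) : signedRank n a = 2 * n + 1 + a :=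
  if_neg h.not_gt

theorem IsSignedPermVec.signedRank_ne {u : Fin n → ℤ} (hu : IsSignedPermVec n u) {i j : Fin n}
    (hij : i ≠ j) : signedRank n (u i) ≠ signedRank n (u j) := by
  have hi := hu.1 i
  have hj := hu.1 j
  have hne : (u i).natAbs ≠ (u j).natAbs := fun h => hij (hu.2 h)
  unfold signedRank; split_ifs <;> omega

def pairInv (u : Fin n → ℤ) (i j : Fin n) : ℕ :=
  (if i < j ∧ signedRank n (u j) < signedRank n (u i) then 1 else 0) +
    (if i ≤ j ∧ signedRank n (-u j) < signedRank n (u i) then 1 else 0)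

def invCount (u : Fin n → ℤ) : ℕ := ∑ x : Fin n × Fin n, pairInv u x.1 x.2

theorem invCount_idWindow : invCount (idWindow n) = 0 := by
  refine Finset.sum_eq_zero fun x _ => ?_
  have hpos : ∀ k, 0 < idWindow n k := fun k => by simp only [idWindow]; omega
  have := x.1.isLt
  simp only [pairInv, signedRank_of_pos (hpos _),
    signedRank_of_nonpos (neg_nonpos.2 (hpos _).le)]
  simp only [idWindow, Fin.lt_def, Fin.le_def]
  split_ifs <;> omega

theorem swap_lt_swap_iff {p q i j : Fin n} (hpq : (p : ℕ) + 1 = q)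
    (hij : ¬(i = p ∧ j = q)) (hji : ¬(i = q ∧ j = p)) :
    Equiv.swap p q i < Equiv.swap p q j ↔ i < j := by
  simp only [Fin.ext_iff] at hij hji
  simp only [Equiv.swap_apply_def, Fin.lt_def]
  split_ifs <;> simp only [Fin.ext_iff] at * <;> omega

theorem pairInv_comp_swap_swap {u : Fin n → ℤ} {p q i j : Fin n} (hpq : (p : ℕ) + 1 = q)
    (hij : ¬(i = p ∧ j = q)) (hji : ¬(i = q ∧ j = p)) :
    pairInv (u ∘ Equiv.swap p q) (Equiv.swap p q i) (Equiv.swap p q j) = pairInv u i j := by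
  have hlt := swap_lt_swap_iff hpq hij hji
  have hgt := swap_lt_swap_iff hpq (fun h => hji h.symm) (fun h => hij h.symm)
  simp only [pairInv, Function.comp_apply, Equiv.swap_apply_self, hlt, ← not_lt, hgt]

theorem invCount_comp_swap {u : Fin n → ℤ} (hu : IsSignedPermVec n u) {p q : Fin n}
    (hpq : (p : ℕ) + 1 = q) :
    invCount (u ∘ Equiv.swap p q) + (if signedRank n (u q) < signedRank n (u p) then 1 else 0)
      = invCount u + (if signedRank n (u p) < signedRank n (u q) then 1 else 0) := by
  set τ := Equiv.swap p q
  have hpq' : p < q := Fin.lt_def.2 (by omega)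
  have hne : (p, q) ≠ (q, p) := by simp [hpq'.ne]
  have hoff : ∀ x ∈ ({(p, q), (q, p)} : Finset _)ᶜ,
      pairInv (u ∘ τ) (τ x.1) (τ x.2) = pairInv u x.1 x.2 := by
    rintro ⟨i, j⟩ hx
    simp only [Finset.mem_compl, Finset.mem_insert, Finset.mem_singleton, Prod.mk.injEq,
      not_or] at hx
    exact pairInv_comp_swap_swap hpq hx.1 hx.2
  have hsum : invCount (u ∘ τ) = ∑ x : Fin n × Fin n, pairInv (u ∘ τ) (τ x.1) (τ x.2) :=
    ((Equiv.prodCongr τ τ).sum_comp fun x => pairInv (u ∘ τ) x.1 x.2).symm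
  rw [hsum, invCount, ← Finset.sum_add_sum_compl {(p, q), (q, p)},
    ← Finset.sum_add_sum_compl {(p, q), (q, p)} (fun x => pairInv u x.1 x.2),
    Finset.sum_congr rfl hoff, Finset.sum_pair hne, Finset.sum_pair hne]
  have hτp : τ p = q := Equiv.swap_apply_left p q
  have hτq : τ q = p := Equiv.swap_apply_right p q
  have hA₁ : pairInv (u ∘ τ) (τ p) (τ q) = 0 := by
    simp [pairInv, hτp, hτq, hpq'.not_gt, hpq'.not_ge]
  have hA₂ : pairInv (u ∘ τ) (τ q) (τ p) =
      (if signedRank n (u p) < signedRank n (u q) then 1 else 0) +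
        (if signedRank n (-u q) < signedRank n (u p) then 1 else 0) := by
    simp [pairInv, hτp, hτq, hpq', hpq'.le, signedRank_neg_lt_comm (hu.1 p) (hu.1 q)]
  have hB₁ : pairInv u p q =
      (if signedRank n (u q) < signedRank n (u p) then 1 else 0) +
        (if signedRank n (-u q) < signedRank n (u p) then 1 else 0) := by
    simp [pairInv, hpq', hpq'.le]
  have hB₂ : pairInv u q p = 0 := by
    simp [pairInv, hpq'.not_gt, hpq'.not_ge]
  rw [hA₁, hA₂, hB₁, hB₂]
  have hrk := hu.signedRank_ne hpq'.ne
  split_ifs <;> omega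

theorem invCount_update_neg {u : Fin n → ℤ} (hu : IsSignedPermVec n u) {m : Fin n}
    (hm : ∀ i, i ≤ m) :
    invCount (Function.update u m (-u m)) + (if u m < 0 then 1 else 0)
      = invCount u + (if 0 < u m then 1 else 0) := by
  set u' := Function.update u m (-u m)
  have hoff : ∀ x ∈ ({(m, m)} : Finset _)ᶜ, pairInv u' x.1 x.2 = pairInv u x.1 x.2 := by
    rintro ⟨i, j⟩ hx
    simp only [Finset.mem_compl, Finset.mem_singleton, Prod.mk.injEq] at hx
    by_cases hj : j = m
    · subst hj
      have hi : i < j := (hm i).lt_of_ne fun h => hx ⟨h, rfl⟩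
      simp [pairInv, u', hi, hi.le, hi.ne, add_comm]
    · have hj' : j < m := (hm j).lt_of_ne hj
      by_cases hi : i = m
      · subst hi
        simp [pairInv, hj'.not_gt, hj'.not_ge]
      · simp [pairInv, u', hi, hj]
  rw [invCount, invCount, ← Finset.sum_add_sum_compl {(m, m)},
    ← Finset.sum_add_sum_compl {(m, m)} (fun x => pairInv u x.1 x.2),
    Finset.sum_congr rfl hoff, Finset.sum_singleton, Finset.sum_singleton]
  have := hu.1 m
  simp only [pairInv, u', Function.update_self, lt_irrefl, le_refl, false_and, true_and,
    if_false, zero_add, neg_neg]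
  unfold signedRank
  split_ifs <;> omega

def IsDescent (u : Fin n → ℤ) (j : Fin n) : Prop :=
  if h : (j : ℕ) + 1 < n then signedRank n (u ⟨j + 1, h⟩) < signedRank n (u j) else u j < 0

theorem invCount_sjZ {u : Fin n → ℤ} (hu : IsSignedPermVec n u) (j : Fin n) :
    (IsDescent u j → invCount (sjZ j u) + 1 = invCount u) ∧
      (¬IsDescent u j → invCount (sjZ j u) = invCount u + 1) := by
  by_cases h : (j : ℕ) + 1 < n
  · have hswap := invCount_comp_swap hu (q := ⟨j + 1, h⟩) rfl
    have hrk := hu.signedRank_ne (i := j) (j := ⟨j + 1, h⟩) (by simp [Fin.ext_iff])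
    simp only [IsDescent, sjZ, h, dite_true]
    constructor <;> intro hd <;> split_ifs at hswap <;> omega
  · have hneg := invCount_update_neg hu (m := j) fun i => Fin.le_def.2 (by omega)
    have := (hu.1 j).1
    simp only [IsDescent, sjZ, h, dite_false]
    constructor <;> intro hd <;> split_ifs at hneg <;> omega

def NoStabDescent (lam u : Fin n → ℤ) : Prop := ∀ j, sjZ j lam = lam → ¬IsDescent u j

theorem exists_factor_noStabDescent {α lam : Fin n → ℤ} (hv : IsSignedPerm v) (hvα : v α = lam) :
    ∃ v₀ L, IsSignedPerm v₀ ∧ v₀ α = lam ∧ NoStabDescent lam (v₀ (idWindow n)) ∧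
      v = word L ∘ v₀ ∧ invCount (v₀ (idWindow n)) + L.length = invCount (v (idWindow n)) := by
  induction hN : invCount (v (idWindow n)) using Nat.strong_induction_on generalizing v with
  | _ N ih =>
  by_cases hnd : NoStabDescent lam (v (idWindow n))
  · exact ⟨v, [], hv, hvα, hnd, rfl, by simp [hN]⟩
  · obtain ⟨j, hjlam, hj⟩ : ∃ j, sjZ j lam = lam ∧ IsDescent (v (idWindow n)) j := by
      simpa [NoStabDescent] using hnd
    have hcount : invCount ((sjZ j ∘ v) (idWindow n)) + 1 = N :=
      hN ▸ (invCount_sjZ hv.isSignedPermVec j).1 hj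
    obtain ⟨v₀, L, hv₀, hv₀α, hnd₀, hfac, hL⟩ :=
      ih _ (by omega) ((isSignedPerm_sjZ j).comp hv) (by simp [hvα, hjlam]) rfl
    refine ⟨v₀, j :: L, hv₀, hv₀α, hnd₀, ?_, ?_⟩
    · funext x
      simpa [sjZ_sjZ] using congrArg (sjZ j) (congrFun hfac x)
    · rw [List.length_cons]
      omega

theorem strictMono_of_val_succ {β : Type*} [Preorder β] {f : Fin n → β}
    (h : ∀ p q : Fin n, (p : ℕ) + 1 = q → f p < f q) : StrictMono f := by
  cases n with
  | zero => exact fun i => i.elim0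
  | succ m => exact Fin.strictMono_iff_lt_succ.2 fun i => h _ _ rfl

theorem strictMono_toLex_of_noStabDescent {lam u : Fin n → ℤ} (hlam : Antitone lam)
    (hu : IsSignedPermVec n u) (h : NoStabDescent lam u) :
    StrictMono fun j => toLex (-lam j, signedRank n (u j)) := by
  refine strictMono_of_val_succ fun p q hpq => ?_
  rcases (hlam (Fin.le_def.2 (by omega) : p ≤ q)).lt_or_eq with hlt | heq
  · exact Prod.Lex.toLex_lt_toLex.2 (Or.inl (neg_lt_neg hlt))
  · refine Prod.Lex.toLex_lt_toLex.2 (Or.inr ⟨by rw [heq], ?_⟩)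
    have hp : (p : ℕ) + 1 < n := hpq ▸ q.isLt
    have hq : (⟨p + 1, hp⟩ : Fin n) = q := Fin.ext hpq
    have hstab : sjZ p lam = lam := by
      funext k
      simp only [sjZ, hp, dite_true, hq, Function.comp_apply, Equiv.swap_apply_def]
      split_ifs with h₁ h₂
      · rw [h₁, heq]
      · rw [h₂, heq]
      · rfl
    have hnd := h p hstab
    simp only [IsDescent, hp, dite_true, hq, not_lt] at hnd
    exact hnd.lt_of_ne (hu.signedRank_ne fun h => by simp [h] at hpq)

theorem pos_of_noStabDescent {lam u : Fin n → ℤ} (hlam : IsPartition lam)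
    (hu : IsSignedPermVec n u) (h : NoStabDescent lam u) {j : Fin n} (hj : lam j = 0) :
    0 < u j := by
  obtain ⟨m, rfl⟩ : ∃ m, n = m + 1 := ⟨n - 1, by have := j.isLt; omega⟩
  have hlast : lam (Fin.last m) = 0 :=
    le_antisymm (hj ▸ hlam.1 _ _ (Fin.le_last j)) (hlam.2 _)
  have hstab : sjZ (Fin.last m) lam = lam := by
    funext k
    by_cases hk : k = Fin.last m
    · subst hk; simp [sjZ, hlast]
    · simp [sjZ, Function.update_of_ne hk]
  have hpos : 0 < u (Fin.last m) := by
    have hnd := h _ hstab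
    have hne := (hu.1 (Fin.last m)).1
    simp only [IsDescent, Fin.val_last, lt_irrefl, dite_false, not_lt] at hnd
    omega
  have hle := (strictMono_toLex_of_noStabDescent hlam.1 hu h).monotone (Fin.le_last j)
  have := hu.1 j
  have := hu.1 (Fin.last m)
  simp only [Prod.Lex.toLex_le_toLex, hj, hlast, lt_irrefl, true_and, false_or] at hle
  unfold signedRank at hle
  split_ifs at hle <;> omega

/-- The order on positions that defines `π_α`, as a lexicographic key. -/
def sahiKey (α : Fin n → ℤ) (k : Fin n) : ℤ ×ₗ ℤ :=
  toLex (-((α k).natAbs : ℤ), signedRank n (if α k < 0 then -((k : ℤ) + 1) else (k : ℤ) + 1))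

theorem SahiPerm.strictMono_sahiKey_comp {α : Fin n → ℤ} {π : Equiv.Perm (Fin n)}
    (hπ : SahiPerm α π) : StrictMono (sahiKey α ∘ π) := by
  intro i j hij
  have ha := (π i).isLt
  have hb := (π j).isLt
  simp only [Function.comp_apply, sahiKey, Prod.Lex.toLex_lt_toLex]
  rcases lt_trichotomy (π i) (π j) with h | h | h
  · have hcond := (hπ _ _ h).1 (by simpa using hij)
    rw [Fin.lt_def] at h
    unfold signedRank
    split_ifs <;> omega
  · exact absurd (π.injective h) hij.ne
  · have hcond := mt (hπ _ _ h).2 (by simpa using hij.not_gt)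
    rw [Fin.lt_def] at h
    unfold signedRank
    split_ifs <;> omega

theorem perm_eq_of_strictMono_comp {β : Type*} [LinearOrder β] {f : Fin n → β}
    {σ τ : Equiv.Perm (Fin n)} (hσ : StrictMono (f ∘ σ)) (hτ : StrictMono (f ∘ τ)) : σ = τ := by
  have key : ∀ {σ : Equiv.Perm (Fin n)}, StrictMono (f ∘ σ) → σ = Tuple.sort f := fun h =>
    Tuple.eq_sort_iff.2 ⟨h.monotone, fun _ _ hij hf => absurd hf (h hij).ne⟩
  rw [key hσ, key hτ]

/-- `w_α⁻¹ = π_α⁻¹ σ_α`, for `π` the permutation `π_α`. -/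
def sahiInv (α : Fin n → ℤ) (π : Equiv.Perm (Fin n)) : (Fin n → ℤ) → Fin n → ℤ :=
  actZ (fun k => decide (α (π k) < 0)) π.symm

theorem eq_sahiInv_of_noStabDescent {α lam : Fin n → ℤ} {π : Equiv.Perm (Fin n)}
    (hπ : SahiPerm α π) (hlam : IsPartition lam) (hv : IsSignedPerm v) (hvα : v α = lam)
    (hnd : NoStabDescent lam (v (idWindow n))) : v = sahiInv α π := by
  have hu := hv.isSignedPermVec
  obtain ⟨ε, σ, rfl⟩ := hv
  have hvα' : ∀ j, (if ε j then -1 else 1) * α (σ.symm j) = lam j := fun j => congrFun hvα j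
  have hsign : ∀ j, ε j = decide (α (σ.symm j) < 0) := by
    intro j
    have h₁ := hvα' j
    have h₂ := hlam.2 j
    have h₃ : lam j = 0 → 0 < actZ ε σ (idWindow n) j := pos_of_noStabDescent hlam hu hnd
    rw [actZ_idWindow_apply] at h₃
    cases h : ε j
    · simp only [h, Bool.false_eq_true, if_false, one_mul] at h₁ h₃
      rw [eq_comm, decide_eq_false_iff_not]
      omega
    · simp only [h, if_true, neg_one_mul] at h₁ h₃
      rw [eq_comm, decide_eq_true_eq]
      omega
  have hkey : (fun j => toLex (-lam j, signedRank n (actZ ε σ (idWindow n) j))) =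
      sahiKey α ∘ σ.symm := by
    funext j
    have h₁ := hvα' j
    have h₂ := hlam.2 j
    rw [hsign j] at h₁
    rw [actZ_idWindow_apply, hsign j]
    simp only [Function.comp_apply, sahiKey]
    by_cases h : α (σ.symm j) < 0
    · simp only [h, decide_true, if_true, neg_one_mul] at h₁ ⊢
      congr 2
      omega
    · simp only [h, decide_false, Bool.false_eq_true, if_false, one_mul] at h₁ ⊢
      congr 2
      omega
  have hσ : σ.symm = π := perm_eq_of_strictMono_comp
    (hkey ▸ strictMono_toLex_of_noStabDescent hlam.1 hu hnd) hπ.strictMono_sahiKey_comp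
  obtain rfl : σ = π.symm := by rw [← hσ, Equiv.symm_symm]
  congr 1
  funext j
  simpa using hsign j

theorem isWord_invCount (hw : IsSignedPerm w) : IsWord w (invCount (w (idWindow n))) := by
  obtain ⟨v₀, L, hv₀, -, hnd, rfl, hcount⟩ :=
    exists_factor_noStabDescent (α := 0) hw hw.map_zero
  -- The identity is the Sahi element of `α = 0`.
  have hsahi : SahiPerm (0 : Fin n → ℤ) 1 := fun _ _ hij =>
    iff_of_true hij (Or.inr ⟨le_rfl, Or.inl rfl⟩)
  have hpart : IsPartition (0 : Fin n → ℤ) := ⟨fun _ _ _ => le_rfl, fun _ => le_rfl⟩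
  obtain rfl : v₀ = id := by
    rw [eq_sahiInv_of_noStabDescent hsahi hpart hv₀ hv₀.map_zero hnd, ← actZ_false_one]
    simp [sahiInv, pull_end]
  have hlen : invCount (word L (idWindow n)) = L.length := by
    simpa [invCount_idWindow] using hcount.symm
  exact ⟨L, hlen.symm, rfl⟩

theorem invCount_word_le_length (L : List (Fin n)) :
    invCount (word L (idWindow n)) ≤ L.length := by
  induction L with
  | nil => simp [invCount_idWindow]
  | cons j L ih =>
    have hsjZ := invCount_sjZ (isSignedPerm_word L).isSignedPermVec j
    rw [word_cons, Function.comp_apply, List.length_cons]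
    by_cases hd : IsDescent (word L (idWindow n)) j
    · have := hsjZ.1 hd; omega
    · have := hsjZ.2 hd; omega

theorem lenW_eq_invCount (hw : IsSignedPerm w) : lenW w = invCount (w (idWindow n)) :=
  le_antisymm (Nat.sInf_le (isWord_invCount hw))
    (le_csInf ⟨_, isWord_invCount hw⟩ fun _ ⟨L, hL, hwL⟩ => hL ▸ hwL ▸ invCount_word_le_length L)

theorem SahiPerm.exists_word_comp {α lam : Fin n → ℤ} {π : Equiv.Perm (Fin n)}
    (hπ : SahiPerm α π) (hlam : IsPartition lam) (hv : IsSignedPerm v) (hvα : v α = lam) :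
    sahiInv α π α = lam ∧ ∃ L : List (Fin n), v = word L ∘ sahiInv α π ∧
      invCount (sahiInv α π (idWindow n)) + L.length = invCount (v (idWindow n)) := by
  obtain ⟨v₀, L, hv₀, hv₀α, hnd, hvL, hL⟩ := exists_factor_noStabDescent hv hvα
  obtain rfl := eq_sahiInv_of_noStabDescent hπ hlam hv₀ hv₀α hnd
  exact ⟨hv₀α, L, hvL, hL⟩

end

/-- `w_α = σ_α π_α` is the unique element of minimal length in `Wₙ` with
`w_α⁻¹ α = α⁺`, i.e. with `w_α(α⁺) = α`, where `α⁺` is the unique partition in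
the `Wₙ`-orbit of `α`, `σ_α = (sgn α₁, …, sgn αₙ)` and `π_α` is the Sahi
permutation of `α`. -/
theorem stmt2 {n : ℕ} (α : Fin n → ℤ) (π : Equiv.Perm (Fin n)) (hπ : SahiPerm α π)
    (lam : Fin n → ℤ) (hlamP : IsPartition lam)
    (hlamO : ∃ (ε : Fin n → Bool) (σ : Equiv.Perm (Fin n)), actZ ε σ α = lam) :
    actZ (fun j => decide (α j < 0)) π lam = α ∧
    (∃ r, IsWord (actZ (fun j => decide (α j < 0)) π) r) ∧
    ∀ w' : (Fin n → ℤ) → (Fin n → ℤ), (∃ r, IsWord w' r) → w' lam = α →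
      w' ≠ actZ (fun j => decide (α j < 0)) π →
      lenW (actZ (fun j => decide (α j < 0)) π) < lenW w' := by
  set w := actZ (fun j => decide (α j < 0)) π
  have hw_inv : w ∘ sahiInv α π = id := actZ_comp_actZ_symm (fun j => decide (α j < 0)) π
  have hinv_w : sahiInv α π ∘ w = id := actZ_symm_comp_actZ (fun j => decide (α j < 0)) π
  have hinv : IsSignedPerm (sahiInv α π) := ⟨_, _, rfl⟩
  obtain ⟨ε, σ, hσ⟩ := hlamO
  have hinv_α := (hπ.exists_word_comp hlamP ⟨ε, σ, rfl⟩ hσ).1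
  refine ⟨by rw [← hinv_α]; exact congrFun hw_inv α, ⟨_, isWord_invCount ⟨_, _, rfl⟩⟩, ?_⟩
  rintro w' ⟨r, hr⟩ hw'lam hne
  obtain ⟨v', hv', hw'v', hv'w'⟩ := hr.isSignedPerm.exists_inverse
  obtain ⟨-, L, hv'L, hL⟩ :=
    hπ.exists_word_comp hlamP hv' (by rw [← hw'lam]; exact congrFun hv'w' lam)
  have hL_ne : L ≠ [] := by
    rintro rfl
    apply hne
    calc w' = w' ∘ (sahiInv α π ∘ w) := by rw [hinv_w]; rfl
      _ = (w' ∘ v') ∘ w := by rw [hv'L]; rfl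
      _ = w := by rw [hw'v']; rfl
  rw [lenW_eq_of_comp_eq_id hw_inv hinv_w, lenW_eq_of_comp_eq_id hw'v' hv'w', lenW_eq_invCount hinv,
    lenW_eq_invCount hv']
  have := List.length_pos_of_ne_nil hL_ne
  omega
end
end

section
/- Let $n > 1$ and $a \in \mathbb{C} \setminus \{0\}$. For every $W_{n-1}$-invariant Laurent polynomial $f$ in $n-1$ variables of degree $d$, there exists a $W_n$-invariant Laurent polynomial $g$ in $n$ variables of degree $d$ such that $g(x_1,\ldots,x_{n-1},a) = f(x_1,\ldots,x_{n-1})$. -/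
/-!
Lift `f` to `n + 1` variables by giving the exponent `β` the coefficient of `f` at `β` with a zero
entry deleted (and `0` if `β` has no zero entry). By `Wₙ`-invariance of `f` this does not depend on
the zero chosen, and the lift is `Wₙ₊₁`-invariant of degree `d`. Setting the last variable to `a`
sends `x^β` to `a^{β_last} x^{init β}` and `|init β| = |β| - |β_last|`, so the only monomials of
weight `d` that survive come from `β = (α, 0)`, whose coefficient is `f α`. Hence the lift
restricted to `xₙ₊₁ = a` differs from `f` by a `Wₙ`-invariant Laurent polynomial of degree `< d`,
which is lifted by induction on `d` and subtracted.
-/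

noncomputable section

/-- The weight `|α| = |α₁| + ⋯ + |αₙ|`. -/
def wtZ {n : ℕ} (α : Fin n → ℤ) : ℕ := ∑ i, (α i).natAbs

/-- A Laurent polynomial (coefficient function) is `Wₙ`-invariant iff its
coefficients are constant on `Wₙ`-orbits of exponents. -/
def WInv {n : ℕ} (c : (Fin n → ℤ) →₀ ℂ) : Prop :=
  ∀ (ε : Fin n → Bool) (π : Equiv.Perm (Fin n)) (α : Fin n → ℤ), c (actZ ε π α) = c α

/-- Evaluation of the Laurent polynomial `∑_α c_α x^α`. -/
def evalL {n : ℕ} (c : (Fin n → ℤ) →₀ ℂ) (x : Fin n → ℂ) : ℂ :=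
  c.sum fun α a => a * ∏ i, x i ^ α i

open Function Finset

variable {n : ℕ}

lemma exists_perm_eq_succAbove_comp {u : Fin n → Fin (n + 1)} (hu : Injective u)
    {j : Fin (n + 1)} (hj : ∀ k, u k ≠ j) : ∃ σ : Equiv.Perm (Fin n), u = j.succAbove ∘ σ := by
  choose σ hσ using fun k => Fin.exists_succAbove_eq (hj k)
  have hσ_inj : Injective σ := fun k l hkl => hu (by rw [← hσ k, ← hσ l, hkl])
  exact ⟨Equiv.ofBijective σ hσ_inj.bijective_of_finite, funext fun k => (hσ k).symm⟩

lemma WInv.apply_signed_comp {f : (Fin n → ℤ) →₀ ℂ} (hf : WInv f) (δ : Fin n → Bool)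
    (β : Fin (n + 1) → ℤ) {u : Fin n → Fin (n + 1)} (hu : Injective u) {j : Fin (n + 1)}
    (hj : ∀ k, u k ≠ j) :
    f (fun k => (if δ k then -1 else 1) * β (u k)) = f (Fin.removeNth j β) := by
  obtain ⟨σ, rfl⟩ := exists_perm_eq_succAbove_comp hu hj
  exact hf δ σ⁻¹ (Fin.removeNth j β)

lemma WInv.apply_removeNth_eq {f : (Fin n → ℤ) →₀ ℂ} (hf : WInv f) {β : Fin (n + 1) → ℤ}
    {j j' : Fin (n + 1)} (hj : β j = 0) (hj' : β j' = 0) :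
    f (Fin.removeNth j β) = f (Fin.removeNth j' β) := by
  have hβ_swap : ∀ i, β (Equiv.swap j j' i) = β i := fun i => by
    rcases eq_or_ne i j with rfl | hij; · simp [hj, hj']
    rcases eq_or_ne i j' with rfl | hij'; · simp [hj, hj']
    rw [Equiv.swap_apply_of_ne_of_ne hij hij']
  rw [← hf.apply_signed_comp (fun _ => false) β
    ((Equiv.injective (Equiv.swap j j')).comp (Fin.succAbove_right_injective (p := j))) (j := j')
    fun k hk => Fin.succAbove_ne j k
      ((Equiv.swap_apply_eq_iff.1 hk).trans (Equiv.swap_apply_right j j'))]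
  congr 1
  funext k
  simp [Fin.removeNth_apply, hβ_swap]

/-- By `WInv.apply_removeNth_eq`, the zero entry that is deleted does not matter. -/
def symmLift (f : (Fin n → ℤ) →₀ ℂ) : (Fin (n + 1) → ℤ) →₀ ℂ :=
  Finsupp.onFinset ((univ ×ˢ f.support).image fun p => Fin.insertNth p.1 0 p.2)
    (fun β => if h : ∃ j, β j = 0 then f (Fin.removeNth h.choose β) else 0)
    (by
      intro β hβ
      split_ifs at hβ with h
      · refine mem_image.2 ⟨(h.choose, _), mem_product.2 ⟨mem_univ _,
          Finsupp.mem_support_iff.2 hβ⟩, ?_⟩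
        conv_rhs => rw [← Fin.insertNth_self_removeNth h.choose β, h.choose_spec]
        rfl
      · exact absurd rfl hβ)

lemma symmLift_apply_of_eq_zero {f : (Fin n → ℤ) →₀ ℂ} (hf : WInv f) {β : Fin (n + 1) → ℤ}
    {j : Fin (n + 1)} (hj : β j = 0) : symmLift f β = f (Fin.removeNth j β) := by
  have h : ∃ j, β j = 0 := ⟨j, hj⟩
  rw [symmLift, Finsupp.onFinset_apply, dif_pos h]
  exact hf.apply_removeNth_eq h.choose_spec hj

lemma symmLift_apply_of_forall_ne_zero (f : (Fin n → ℤ) →₀ ℂ) {β : Fin (n + 1) → ℤ}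
    (h : ∀ j, β j ≠ 0) : symmLift f β = 0 :=
  dif_neg (not_exists.2 h)

lemma symmLift_snoc_zero {f : (Fin n → ℤ) →₀ ℂ} (hf : WInv f) (α : Fin n → ℤ) :
    symmLift f (Fin.snoc α 0) = f α := by
  rw [symmLift_apply_of_eq_zero hf (j := Fin.last n) (by simp), Fin.removeNth_last,
    Fin.init_snoc]

lemma WInv.symmLift {f : (Fin n → ℤ) →₀ ℂ} (hf : WInv f) : WInv (symmLift f) := by
  intro ε π β
  by_cases h : ∃ j, β j = 0
  · obtain ⟨j, hj⟩ := h
    rw [symmLift_apply_of_eq_zero hf (j := π j) (by simp [actZ, hj]),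
      symmLift_apply_of_eq_zero hf hj]
    exact hf.apply_signed_comp (ε ∘ (π j).succAbove) β
      ((Equiv.injective _).comp Fin.succAbove_right_injective)
      fun k hk => Fin.succAbove_ne (π j) k (by simpa using congrArg π hk)
  · push Not at h
    rw [symmLift_apply_of_forall_ne_zero _ h, symmLift_apply_of_forall_ne_zero]
    intro j
    simp only [actZ]
    cases ε j <;> simp [h]

lemma wtZ_eq_natAbs_add_wtZ_removeNth (β : Fin (n + 1) → ℤ) (j : Fin (n + 1)) :
    wtZ β = (β j).natAbs + wtZ (Fin.removeNth j β) :=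
  Fin.sum_univ_succAbove _ j

lemma wtZ_snoc (α : Fin n → ℤ) (k : ℤ) :
    wtZ (Fin.snoc α k : Fin (n + 1) → ℤ) = wtZ α + k.natAbs := by
  rw [wtZ_eq_natAbs_add_wtZ_removeNth _ (Fin.last n), Fin.removeNth_last, Fin.init_snoc,
    Fin.snoc_last, add_comm]

lemma wtZ_le_of_mem_support_symmLift {f : (Fin n → ℤ) →₀ ℂ} (hf : WInv f) {d : ℕ}
    (hd : ∀ α ∈ f.support, wtZ α ≤ d) {β : Fin (n + 1) → ℤ} (hβ : β ∈ (symmLift f).support) :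
    wtZ β ≤ d := by
  by_cases h : ∃ j, β j = 0
  · obtain ⟨j, hj⟩ := h
    rw [Finsupp.mem_support_iff, symmLift_apply_of_eq_zero hf hj] at hβ
    rw [wtZ_eq_natAbs_add_wtZ_removeNth β j, hj, Int.natAbs_zero, zero_add]
    exact hd _ (Finsupp.mem_support_iff.2 hβ)
  · push Not at h
    exact absurd (symmLift_apply_of_forall_ne_zero f h) (Finsupp.mem_support_iff.1 hβ)

def specializeLast (a : ℂ) (g : (Fin (n + 1) → ℤ) →₀ ℂ) : (Fin n → ℤ) →₀ ℂ :=
  Finsupp.onFinset (g.support.image Fin.init)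
    (fun α => ∑ k ∈ g.support.image (· (Fin.last n)), g (Fin.snoc α k) * a ^ k)
    (by
      intro α hα
      obtain ⟨k, -, hk⟩ := exists_ne_zero_of_sum_ne_zero hα
      exact mem_image.2
        ⟨_, Finsupp.mem_support_iff.2 (left_ne_zero_of_mul hk), Fin.init_snoc _ _⟩)

lemma evalL_specializeLast (a : ℂ) (g : (Fin (n + 1) → ℤ) →₀ ℂ) (x : Fin n → ℂ) :
    evalL (specializeLast a g) x = evalL g (Fin.snoc x a) := by
  set I := g.support.image Fin.init
  set K := g.support.image (· (Fin.last n))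
  have hsupp : g.support ⊆ (I ×ˢ K).image fun p => Fin.snoc p.1 p.2 := fun β hβ =>
    mem_image.2 ⟨(Fin.init β, β (Fin.last n)),
      mem_product.2 ⟨mem_image_of_mem _ hβ, mem_image_of_mem _ hβ⟩, Fin.snoc_init_self β⟩
  have hinj : Set.InjOn (fun p : (Fin n → ℤ) × ℤ => (Fin.snoc p.1 p.2 : Fin (n + 1) → ℤ))
      (I ×ˢ K : Finset _) := fun p _ q _ hpq => Prod.ext_iff.2 (Fin.snoc_injective2 hpq)
  have hmonomial : ∀ (α : Fin n → ℤ) (k : ℤ),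
      ∏ i, (Fin.snoc x a : Fin (n + 1) → ℂ) i ^ (Fin.snoc α k : Fin (n + 1) → ℤ) i
        = a ^ k * ∏ i, x i ^ α i := by
    intro α k
    simp [Fin.prod_univ_castSucc, mul_comm]
  calc evalL (specializeLast a g) x
      = ∑ α ∈ I, ∑ k ∈ K, g (Fin.snoc α k) * a ^ k * ∏ i, x i ^ α i := by
        rw [evalL, specializeLast, Finsupp.onFinset_sum _ fun _ => zero_mul _]
        simp_rw [sum_mul]
        rfl
    _ = ∑ β ∈ (I ×ˢ K).image fun p => Fin.snoc p.1 p.2,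
          g β * ∏ i, (Fin.snoc x a : Fin (n + 1) → ℂ) i ^ β i := by
        rw [sum_image hinj, sum_product]
        simp_rw [hmonomial, mul_assoc]
    _ = evalL g (Fin.snoc x a) :=
        (Finsupp.sum_of_support_subset g hsupp
          (fun β c => c * ∏ i, (Fin.snoc x a : Fin (n + 1) → ℂ) i ^ β i)
          fun _ _ => zero_mul _).symm

lemma snoc_actZ (ε : Fin n → Bool) (π : Equiv.Perm (Fin n)) (α : Fin n → ℤ) (k : ℤ) :
    (Fin.snoc (actZ ε π α) k : Fin (n + 1) → ℤ)
      = actZ (Fin.snoc ε false) (π.viaFintypeEmbedding Fin.castSuccEmb) (Fin.snoc α k) := by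
  set τ := π.viaFintypeEmbedding Fin.castSuccEmb
  have hτ_last : τ.symm (Fin.last n) = Fin.last n := by
    rw [Equiv.symm_apply_eq, Equiv.Perm.viaFintypeEmbedding_apply_notMem_range]
    simp [Fin.range_castSucc]
  have hτ_castSucc (i : Fin n) : τ.symm i.castSucc = (π.symm i).castSucc := by
    rw [Equiv.symm_apply_eq]
    exact ((π.viaFintypeEmbedding_apply_image Fin.castSuccEmb (π.symm i)).trans
      (congrArg _ (π.apply_symm_apply i))).symm
  funext j
  induction j using Fin.lastCases with
  | last => simp [actZ, hτ_last]
  | cast i => simp [actZ, hτ_castSucc]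

lemma WInv.specializeLast {g : (Fin (n + 1) → ℤ) →₀ ℂ} (hg : WInv g) (a : ℂ) :
    WInv (specializeLast a g) := by
  intro ε π α
  refine sum_congr rfl fun k _ => ?_
  rw [snoc_actZ, hg]

lemma specializeLast_apply_of_le_wtZ (a : ℂ) {g : (Fin (n + 1) → ℤ) →₀ ℂ} {d : ℕ}
    (hg : ∀ β ∈ g.support, wtZ β ≤ d) {α : Fin n → ℤ} (hα : d ≤ wtZ α) :
    specializeLast a g α = g (Fin.snoc α 0) := by
  have hvanish (k : ℤ) (hk : k ≠ 0) : g (Fin.snoc α k) = 0 := by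
    by_contra hne
    have := hg _ (Finsupp.mem_support_iff.2 hne)
    rw [wtZ_snoc] at this
    have := Int.natAbs_pos.2 hk
    omega
  rw [specializeLast, Finsupp.onFinset_apply,
    sum_eq_single 0 (fun k _ hk => by rw [hvanish k hk, zero_mul]), zpow_zero, mul_one]
  intro h0
  by_contra hne
  exact h0 (mem_image.2
    ⟨_, Finsupp.mem_support_iff.2 (left_ne_zero_of_mul hne), Fin.snoc_last _ _⟩)

lemma WInv.sub {c c' : (Fin n → ℤ) →₀ ℂ} (hc : WInv c) (hc' : WInv c') : WInv (c - c') :=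
  fun ε π α => by rw [Finsupp.sub_apply, Finsupp.sub_apply, hc, hc']

lemma evalL_sub (c c' : (Fin n → ℤ) →₀ ℂ) (x : Fin n → ℂ) :
    evalL (c - c') x = evalL c x - evalL c' x :=
  Finsupp.sum_sub_index fun _ _ _ => sub_mul _ _ _

def liftError (a : ℂ) (f : (Fin n → ℤ) →₀ ℂ) : (Fin n → ℤ) →₀ ℂ :=
  specializeLast a (symmLift f) - f

lemma WInv.liftError {f : (Fin n → ℤ) →₀ ℂ} (hf : WInv f) (a : ℂ) : WInv (liftError a f) :=
  (hf.symmLift.specializeLast a).sub hf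

lemma wtZ_lt_of_mem_support_liftError {f : (Fin n → ℤ) →₀ ℂ} (hf : WInv f) (a : ℂ) {d : ℕ}
    (hd : ∀ α ∈ f.support, wtZ α ≤ d) : ∀ α ∈ (liftError a f).support, wtZ α < d := by
  intro α hα
  by_contra! hle
  rw [Finsupp.mem_support_iff, liftError, Finsupp.sub_apply,
    specializeLast_apply_of_le_wtZ a (fun β => wtZ_le_of_mem_support_symmLift hf hd) hle,
    symmLift_snoc_zero hf, sub_self] at hα
  exact hα rfl

lemma evalL_symmLift_sub {f : (Fin n → ℤ) →₀ ℂ} {h : (Fin (n + 1) → ℤ) →₀ ℂ} {a : ℂ}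
    {x : Fin n → ℂ} (hh : evalL h (Fin.snoc x a) = evalL (liftError a f) x) :
    evalL (symmLift f - h) (Fin.snoc x a) = evalL f x := by
  rw [evalL_sub, hh, liftError, evalL_sub, evalL_specializeLast, sub_sub_cancel]

lemma wtZ_le_of_mem_support_symmLift_sub {f : (Fin n → ℤ) →₀ ℂ} (hf : WInv f) {d : ℕ}
    (hd : ∀ α ∈ f.support, wtZ α ≤ d) {h : (Fin (n + 1) → ℤ) →₀ ℂ}
    (hh : ∀ β ∈ h.support, wtZ β < d) : ∀ β ∈ (symmLift f - h).support, wtZ β ≤ d := by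
  intro β hβ
  rcases mem_union.1 (Finsupp.support_sub hβ) with hβ | hβ
  · exact wtZ_le_of_mem_support_symmLift hf hd hβ
  · exact (hh β hβ).le

theorem exists_WInv_lift_of_wtZ_lt (a : ℂ) :
    ∀ (d : ℕ) (r : (Fin n → ℤ) →₀ ℂ), WInv r → (∀ α ∈ r.support, wtZ α < d) →
      ∃ h : (Fin (n + 1) → ℤ) →₀ ℂ, WInv h ∧ (∀ β ∈ h.support, wtZ β < d) ∧
        ∀ x, evalL h (Fin.snoc x a) = evalL r x
  | 0, r, _, hr => by
    have hr₀ : r = 0 := by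
      ext α
      by_contra hne
      exact Nat.not_lt_zero _ (hr α (Finsupp.mem_support_iff.2 hne))
    exact ⟨0, fun _ _ _ => rfl, by simp, fun x => by simp [hr₀, evalL]⟩
  | d + 1, r, hr, hrd => by
    have hrd' : ∀ α ∈ r.support, wtZ α ≤ d := fun α hα => Nat.lt_succ_iff.1 (hrd α hα)
    obtain ⟨h, hhW, hhd, hh⟩ := exists_WInv_lift_of_wtZ_lt a d (liftError a r)
      (hr.liftError a) (wtZ_lt_of_mem_support_liftError hr a hrd')
    exact ⟨symmLift r - h, hr.symmLift.sub hhW,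
      fun β hβ => Nat.lt_succ_of_le (wtZ_le_of_mem_support_symmLift_sub hr hrd' hhd β hβ),
      fun x => evalL_symmLift_sub (hh x)⟩

theorem stmt4_general {n : ℕ} (a : ℂ) (d : ℕ)
    (f : (Fin n → ℤ) →₀ ℂ) (hfW : WInv f)
    (hfdeg : ∀ α ∈ f.support, wtZ α ≤ d) (hfdeg' : ∃ α ∈ f.support, wtZ α = d) :
    ∃ g : (Fin (n + 1) → ℤ) →₀ ℂ, WInv g ∧
      (∀ α ∈ g.support, wtZ α ≤ d) ∧ (∃ α ∈ g.support, wtZ α = d) ∧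
      ∀ x : Fin n → ℂ, (∀ i, x i ≠ 0) → evalL g (Fin.snoc x a) = evalL f x := by
  obtain ⟨h, hhW, hhd, hh⟩ := exists_WInv_lift_of_wtZ_lt a d (liftError a f)
    (hfW.liftError a) (wtZ_lt_of_mem_support_liftError hfW a hfdeg)
  obtain ⟨α₀, hα₀, hα₀d⟩ := hfdeg'
  have hwt : wtZ (Fin.snoc α₀ 0 : Fin (n + 1) → ℤ) = d := by
    rw [wtZ_snoc, Int.natAbs_zero, add_zero, hα₀d]
  have hh₀ : h (Fin.snoc α₀ 0) = 0 :=
    Finsupp.notMem_support_iff.1 fun hmem => (hhd _ hmem).ne hwt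
  refine ⟨symmLift f - h, hfW.symmLift.sub hhW, wtZ_le_of_mem_support_symmLift_sub hfW hfdeg hhd,
    ⟨Fin.snoc α₀ 0, ?_, hwt⟩, fun x _ => evalL_symmLift_sub (hh x)⟩
  rw [Finsupp.mem_support_iff, Finsupp.sub_apply, symmLift_snoc_zero hfW, hh₀, sub_zero]
  exact Finsupp.mem_support_iff.1 hα₀

/-- For every `W_n`-invariant Laurent polynomial `f` in `n` variables of degree `d`
and `a ≠ 0`, there is a `W_{n+1}`-invariant Laurent polynomial `g` in `n+1`
variables of degree `d` with `g(x, a) = f(x)`. -/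
theorem stmt4 {n : ℕ} (hn : 1 ≤ n) (a : ℂ) (ha : a ≠ 0) (d : ℕ)
    (f : (Fin n → ℤ) →₀ ℂ) (hfW : WInv f)
    (hfdeg : ∀ α ∈ f.support, wtZ α ≤ d) (hfdeg' : ∃ α ∈ f.support, wtZ α = d) :
    ∃ g : (Fin (n + 1) → ℤ) →₀ ℂ, WInv g ∧
      (∀ α ∈ g.support, wtZ α ≤ d) ∧ (∃ α ∈ g.support, wtZ α = d) ∧
      ∀ x : Fin n → ℂ, (∀ i, x i ≠ 0) → evalL g (Fin.snoc x a) = evalL f x :=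
  stmt4_general a d f hfW hfdeg hfdeg'
end
end

section
/- Let $0 < |q| < 1$, $n \ge 1$, $d \ge 0$, and $\tau \in \mathbb{C}^n$ with $0 < |\tau_1| < \cdots < |\tau_n| < 1$. For every function $\overline{f}$ from the set $\Lambda_{n,d}^+$ of partitions of length $\le n$ and weight $\le d$ to $\mathbb{C}$, there is a unique $W_n$-invariant Laurent polynomial $f$ in $n$ variables of degree $\le d$ such that $f(\overline{\mu}) = \overline{f}(\mu)$ for all $\mu \in \Lambda_{n,d}^+$, where $\overline{\mu}_i = q^{\mu_i}\tau_i$. -/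
/-!
The heart is a vanishing theorem: a `Wₙ`-invariant Laurent polynomial `f` of degree `≤ d` that
vanishes at every `μ̄` with `|μ| ≤ d` is zero. By induction on `n`, putting `xₙ = τₙ` leaves such a
polynomial in `n - 1` variables (evaluate at the points `(μ, 0)`), so `xₙ - τₙ ∣ f`. By invariance
every `xᵢ - τₙ^{±1}` divides `f`; these are pairwise non-associated primes (the kernels of the
substitutions `xᵢ ↦ τₙ^{±1}`), so `f = ∏ᵢ (xᵢ + xᵢ⁻¹ - τₙ - τₙ⁻¹) g` with `g` invariant. Comparing
top coefficients gives `deg g ≤ d - n`, and since the product does not vanish at the points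
`q^(μ + 1) τ`, `g` vanishes at `q^μ (q τ)`; induction on `d` with `τ` replaced by `q τ` gives
`g = 0`.

Extending a function on partitions constantly along `Wₙ`-orbits is an injective linear map into
the invariant polynomials of degree `≤ d`; followed by evaluation at the `μ̄` it is an injective,
hence bijective, endomorphism of `ℂ^Λ`, which gives existence, and the vanishing theorem gives
uniqueness.
-/

noncomputable section

/-- The chain condition `0 < |τ₁| < ⋯ < |τₙ| < 1`. -/
def TauChain {n : ℕ} (τ : Fin n → ℂ) : Prop :=
  (∀ i, 0 < ‖τ i‖) ∧ StrictMono (fun i => ‖τ i‖) ∧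
    ∀ i, ‖τ i‖ < 1

theorem Units.sub_dvd_zpow_sub_zpow {R : Type*} [CommRing R] (u v : Rˣ) (k : ℤ) :
    ((u : R) - v) ∣ ((u ^ k : Rˣ) : R) - ((v ^ k : Rˣ) : R) := by
  obtain ⟨k, rfl | rfl⟩ := Int.eq_nat_or_neg k
  · simpa using sub_dvd_pow_sub_pow (u : R) v k
  · have hinv : (u : R) - v ∣ ((u⁻¹ : Rˣ) : R) - ((v⁻¹ : Rˣ) : R) := by
      refine ⟨-((u⁻¹ * v⁻¹ : Rˣ) : R), ?_⟩
      have hu : (u : R) * ((u⁻¹ : Rˣ) : R) = 1 := u.mul_inv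
      have hv : (v : R) * ((v⁻¹ : Rˣ) : R) = 1 := v.mul_inv
      rw [Units.val_mul]
      linear_combination ((v⁻¹ : Rˣ) : R) * hu - ((u⁻¹ : Rˣ) : R) * hv
    simpa [zpow_neg, ← inv_pow] using hinv.trans (sub_dvd_pow_sub_pow _ _ k)

theorem Finset.prod_dvd_of_prime {ι M : Type*} [CommMonoidWithZero M] {s : Finset ι} {p : ι → M}
    {x : M} (hp : ∀ i ∈ s, Prime (p i)) (hp' : (s : Set ι).Pairwise fun i j => ¬p i ∣ p j)
    (hx : ∀ i ∈ s, p i ∣ x) : ∏ i ∈ s, p i ∣ x := by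
  classical
  induction s using Finset.induction_on generalizing x with
  | empty => simp
  | insert j s hj ih =>
    obtain ⟨y, rfl⟩ := hx j (mem_insert_self j s)
    rw [prod_insert hj]
    refine mul_dvd_mul_left _ (ih (fun i hi => hp i (mem_insert_of_mem hi))
      (hp'.mono (by simp)) fun i hi => ?_)
    have hij : i ≠ j := ne_of_mem_of_not_mem hi hj
    exact ((hp i (mem_insert_of_mem hi)).dvd_or_dvd (hx i (mem_insert_of_mem hi))).resolve_left
      (hp' (by simp [hi]) (by simp) hij)

theorem Submodule.existsUnique_mem_and_apply_eq {K M N : Type*} [Field K] [AddCommGroup M]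
    [Module K M] [AddCommGroup N] [Module K N] [FiniteDimensional K N] {V : Submodule K M}
    {E : M →ₗ[K] N} {s : N →ₗ[K] M} (hs : ∀ y, s y ∈ V) (hs' : Function.Injective s)
    (hE : ∀ x ∈ V, E x = 0 → x = 0) (y : N) : ∃! x, x ∈ V ∧ E x = y := by
  have hinj : Function.Injective (E ∘ₗ s) := by
    rw [← LinearMap.ker_eq_bot, LinearMap.ker_eq_bot']
    exact fun z hz => hs' ((hE _ (hs z) hz).trans (map_zero s).symm)
  obtain ⟨z, hz⟩ := LinearMap.injective_iff_surjective.mp hinj y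
  refine ⟨s z, ⟨hs z, hz⟩, fun x ⟨hxV, hxy⟩ => sub_eq_zero.mp (hE _ (V.sub_mem hxV (hs z)) ?_)⟩
  rw [map_sub, hxy, ← LinearMap.comp_apply, hz, sub_self]

theorem self_ne_inv_of_norm_lt_one {𝕜 : Type*} [NormedField 𝕜] {a : 𝕜} (ha0 : a ≠ 0)
    (ha : ‖a‖ < 1) : a ≠ a⁻¹ := fun h => by
  have := congr_arg norm (mul_inv_cancel₀ ha0)
  rw [← h, norm_mul, norm_one] at this
  nlinarith [norm_nonneg a]

theorem add_inv_ne_add_inv {𝕜 : Type*} [NormedField 𝕜] {z a : 𝕜} (hz : z ≠ 0) (hza : ‖z‖ < ‖a‖)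
    (ha : ‖a‖ < 1) : z + z⁻¹ ≠ a + a⁻¹ := by
  have ha0 : a ≠ 0 := norm_pos_iff.mp ((norm_nonneg z).trans_lt hza)
  have hza' : z ≠ a := fun h => (h ▸ hza).false
  have hza1 : z * a ≠ 1 := fun h => by
    have := congr_arg norm h
    rw [norm_mul, norm_one] at this
    nlinarith [norm_nonneg z]
  intro h
  have key : (z + z⁻¹ - (a + a⁻¹)) * (z * a) = (z - a) * (z * a - 1) := by
    field_simp
    ring
  rw [h, sub_self, zero_mul] at key
  exact mul_ne_zero (sub_ne_zero.mpr hza') (sub_ne_zero.mpr hza1) key.symm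

theorem norm_zpow_mul_lt {q z : ℂ} (hq0 : q ≠ 0) (hq1 : ‖q‖ < 1) (hz : z ≠ 0) {k : ℤ}
    (hk : 0 < k) : ‖q ^ k * z‖ < ‖z‖ := by
  rw [norm_mul, norm_zpow]
  exact mul_lt_of_lt_one_left (norm_pos_iff.mpr hz) (zpow_lt_one₀ (norm_pos_iff.mpr hq0) hq1 hk)

namespace AddMonoidAlgebra

variable {R A ι : Type*} [CommSemiring R] [AddCommMonoid A] [PartialOrder A]
  [IsOrderedCancelAddMonoid A]

theorem uniqueAdd_of_forall_le {s t : Finset A} {a b : A} (hs : ∀ x ∈ s, x ≤ a)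
    (ht : ∀ y ∈ t, y ≤ b) : UniqueAdd s t a b := by
  intro x y hx hy hxy
  have hxa : x = a := by
    by_contra hne
    exact (add_lt_add_of_lt_of_le (lt_of_le_of_ne (hs x hx) hne) (ht y hy)).ne hxy
  exact ⟨hxa, add_left_cancel (hxa ▸ hxy)⟩

theorem coeff_prod_of_forall_le (s : Finset ι) (p : ι → R[A]) (a : ι → A)
    (h : ∀ i ∈ s, ∀ x ∈ (p i).coeff.support, x ≤ a i) :
    (∀ x ∈ (∏ i ∈ s, p i).coeff.support, x ≤ ∑ i ∈ s, a i) ∧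
      (∏ i ∈ s, p i).coeff (∑ i ∈ s, a i) = ∏ i ∈ s, (p i).coeff (a i) := by
  classical
  induction s using Finset.induction_on with
  | empty =>
    refine ⟨fun x hx => ?_, by simp [one_def]⟩
    simp only [Finset.prod_empty, one_def, coeff_single] at hx
    simp [Finset.mem_singleton.mp (Finsupp.support_single_subset hx)]
  | insert j s hj ih =>
    obtain ⟨ih₁, ih₂⟩ := ih fun i hi => h i (Finset.mem_insert_of_mem hi)
    have hj' := h j (Finset.mem_insert_self j s)
    rw [Finset.prod_insert hj, Finset.sum_insert hj, Finset.prod_insert hj]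
    refine ⟨fun x hx => ?_, ?_⟩
    · obtain ⟨y, hy, z, hz, rfl⟩ := Finset.mem_add.mp (support_coeff_mul_subset _ _ hx)
      exact add_le_add (hj' y hy) (ih₁ z hz)
    · rw [coeff_mul_add_of_uniqueAdd (uniqueAdd_of_forall_le hj' ih₁), ih₂]

end AddMonoidAlgebra

namespace Tuple

variable {n : ℕ} {α : Type*} [LinearOrder α]

def sortDesc (g : Fin n → α) : Fin n → α := g ∘ Tuple.sort g ∘ Fin.rev

theorem antitone_sortDesc (g : Fin n → α) : Antitone (sortDesc g) :=
  fun _ _ hij => Tuple.monotone_sort g (Fin.rev_le_rev.mpr hij)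

theorem exists_perm_sortDesc_eq (g : Fin n → α) : ∃ σ : Equiv.Perm (Fin n), sortDesc g = g ∘ σ :=
  ⟨Fin.revPerm.trans (Tuple.sort g), rfl⟩

theorem sortDesc_comp_perm (g : Fin n → α) (σ : Equiv.Perm (Fin n)) :
    sortDesc (g ∘ σ) = sortDesc g := by
  simp only [sortDesc, ← Function.comp_assoc, Tuple.comp_perm_comp_sort_eq_comp_sort]

theorem _root_.Antitone.sortDesc_eq {g : Fin n → α} (hg : Antitone g) : sortDesc g = g := by
  have h : g ∘ Fin.revPerm = g ∘ Tuple.sort g :=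
    Tuple.comp_sort_eq_comp_iff_monotone.mpr fun i j hij => hg (Fin.rev_le_rev.mpr hij)
  rw [sortDesc, ← Function.comp_assoc, ← h]
  funext i
  simp

end Tuple

section Weights

variable {n m : ℕ}

theorem sum_le_wtZ (α : Fin n → ℤ) : ∑ i, α i ≤ (wtZ α : ℤ) := by
  rw [wtZ, Nat.cast_sum]
  exact Finset.sum_le_sum fun i _ => Int.le_natAbs

theorem wtZ_eq_sum {α : Fin n → ℤ} (hα : 0 ≤ α) : (wtZ α : ℤ) = ∑ i, α i := by
  rw [wtZ, Nat.cast_sum]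
  exact Finset.sum_congr rfl fun i _ => Int.natAbs_of_nonneg (hα i)

theorem wtZ_abs (α : Fin n → ℤ) : wtZ |α| = wtZ α := by
  simp [wtZ, Int.natAbs_abs]

theorem wtZ_comp_perm (α : Fin n → ℤ) (σ : Equiv.Perm (Fin n)) : wtZ (α ∘ σ) = wtZ α :=
  Equiv.sum_comp σ fun i => (α i).natAbs

theorem wtZ_add_one {μ : Fin n → ℤ} (hμ : 0 ≤ μ) : wtZ (μ + 1) = wtZ μ + n := by
  have h₁ := wtZ_eq_sum (add_nonneg hμ zero_le_one)
  have h₂ := wtZ_eq_sum hμ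
  simp only [Pi.add_apply, Pi.one_apply, Finset.sum_add_distrib, Finset.sum_const,
    Finset.card_univ, Fintype.card_fin, nsmul_eq_mul, mul_one] at h₁
  omega

theorem wtZ_snoc_zero (μ : Fin m → ℤ) : wtZ (Fin.snoc μ 0 : Fin (m + 1) → ℤ) = wtZ μ := by
  simp [wtZ, Fin.sum_univ_castSucc]

theorem finite_setOf_wtZ_le (n d : ℕ) : {α : Fin n → ℤ | wtZ α ≤ d}.Finite := by
  refine (Set.finite_Icc (-(d : Fin n → ℤ)) d).subset fun α hα => ?_
  have hle : ∀ i, |α i| ≤ d := fun i => by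
    rw [Int.abs_eq_natAbs]
    exact_mod_cast (Finset.single_le_sum (fun j _ => Nat.zero_le _) (Finset.mem_univ i)).trans
      (show wtZ α ≤ d from hα)
  exact ⟨fun i => neg_le_of_abs_le (hle i), fun i => le_of_abs_le (hle i)⟩

theorem abs_actZ (ε : Fin n → Bool) (π : Equiv.Perm (Fin n)) (α : Fin n → ℤ) :
    |actZ ε π α| = |α| ∘ π.symm := by
  funext j
  by_cases h : ε j <;> simp [actZ, h]

theorem wtZ_actZ (ε : Fin n → Bool) (π : Equiv.Perm (Fin n)) (α : Fin n → ℤ) :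
    wtZ (actZ ε π α) = wtZ α := by
  rw [← wtZ_abs, abs_actZ, wtZ_comp_perm, wtZ_abs]

theorem IsPartition.add_one {μ : Fin n → ℤ} (hμ : IsPartition μ) : IsPartition (μ + 1) :=
  ⟨fun i j hij => by simpa using hμ.1 i j hij, fun i => add_nonneg (hμ.2 i) zero_le_one⟩

theorem IsPartition.snoc_zero {μ : Fin m → ℤ} (hμ : IsPartition μ) :
    IsPartition (Fin.snoc μ 0 : Fin (m + 1) → ℤ) := by
  refine ⟨fun i j hij => ?_, fun i => ?_⟩
  · induction j using Fin.lastCases with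
    | last =>
      induction i using Fin.lastCases with
      | last => rfl
      | cast i => simpa using hμ.2 i
    | cast j =>
      induction i using Fin.lastCases with
      | last => exact absurd hij (not_le.mpr (Fin.castSucc_lt_last j))
      | cast i => simpa using hμ.1 i j (Fin.castSucc_le_castSucc_iff.mp hij)
  · induction i using Fin.lastCases with
    | last => simp
    | cast i => simpa using hμ.2 i

theorem TauChain.castSucc {τ : Fin (m + 1) → ℂ} (hτ : TauChain τ) :
    TauChain fun j : Fin m => τ j.castSucc :=
  ⟨fun _ => hτ.1 _, hτ.2.1.comp Fin.strictMono_castSucc, fun _ => hτ.2.2 _⟩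

theorem TauChain.mul_left {τ : Fin n → ℂ} (hτ : TauChain τ) {q : ℂ} (hq0 : q ≠ 0)
    (hq1 : ‖q‖ < 1) : TauChain fun i => q * τ i := by
  have hq : 0 < ‖q‖ := norm_pos_iff.mpr hq0
  refine ⟨fun i => ?_, fun i j hij => ?_, fun i => ?_⟩
  · rw [norm_mul]; exact mul_pos hq (hτ.1 i)
  · simp only [norm_mul]; exact mul_lt_mul_of_pos_left (hτ.2.1 hij) hq
  · rw [norm_mul]; nlinarith [hτ.1 i, hτ.2.2 i]

theorem TauChain.norm_le_last {τ : Fin (m + 1) → ℂ} (hτ : TauChain τ) (i : Fin (m + 1)) :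
    ‖τ i‖ ≤ ‖τ (Fin.last m)‖ :=
  hτ.2.1.monotone (Fin.le_last i)

end Weights

namespace BCInterpolation

open AddMonoidAlgebra

abbrev LaurentPoly (n : ℕ) := AddMonoidAlgebra ℂ (Fin n → ℤ)

local notation "C" => algebraMap ℂ (LaurentPoly _)

variable {n m : ℕ}

def X (i : Fin n) : LaurentPoly n := single (Pi.single i 1) 1

def Xinv (i : Fin n) : LaurentPoly n := single (-Pi.single i 1) 1

def pairFactor (a : ℂ) (i : Fin n) : LaurentPoly n := X i + Xinv i - C (a + a⁻¹)

theorem C_apply (c : ℂ) : (C c : LaurentPoly n) = single 0 c :=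
  rfl

theorem X_mul_Xinv (i : Fin n) : X i * Xinv i = 1 := by
  rw [X, Xinv, single_mul_single, add_neg_cancel, one_mul]
  rfl

theorem C_mul_C_inv (a : ℂˣ) : (C a : LaurentPoly n) * C ↑a⁻¹ = 1 := by
  rw [← map_mul, Units.mul_inv, map_one]

theorem X_mul_pairFactor (a : ℂˣ) (i : Fin n) :
    X i * pairFactor a i = (X i - C a) * (X i - C ↑a⁻¹) := by
  have h := C_mul_C_inv (n := n) a
  rw [Units.val_inv_eq_inv_val] at h ⊢
  rw [pairFactor, map_add]
  linear_combination X_mul_Xinv i - h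

theorem Xinv_sub_C (i : Fin n) (a : ℂˣ) :
    Xinv i - C a = (X i - C ↑a⁻¹) * (-C a * Xinv i) := by
  linear_combination C (a : ℂ) * X_mul_Xinv i - Xinv i * C_mul_C_inv (n := n) a

/-! ### Evaluation -/

def character (x : Fin n → ℂˣ) : Multiplicative (Fin n → ℤ) →* ℂ where
  toFun α := ((∏ i, x i ^ α.toAdd i : ℂˣ) : ℂ)
  map_one' := by simp
  map_mul' α β := by simp [zpow_add, Finset.prod_mul_distrib]

def eval (x : Fin n → ℂˣ) : LaurentPoly n →ₐ[ℂ] ℂ := lift ℂ ℂ _ (character x)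

theorem eval_single (x : Fin n → ℂˣ) (α : Fin n → ℤ) (r : ℂ) :
    eval x (single α r) = r * ∏ i, (x i : ℂ) ^ α i := by
  simp [eval, character, lift_single, smul_eq_mul]

theorem evalL_eq_eval (x : Fin n → ℂˣ) (c : (Fin n → ℤ) →₀ ℂ) :
    evalL c (fun i => x i) = eval x (ofCoeff c) := by
  rw [eval, lift_apply]
  exact Finsupp.sum_congr fun α _ => by simp [character, smul_eq_mul]

theorem eval_X (x : Fin n → ℂˣ) (i : Fin n) : eval x (X i) = x i := by
  rw [X, eval_single, one_mul, Finset.prod_eq_single i (fun j _ hj => by simp [hj]) (by simp)]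
  simp

theorem eval_Xinv (x : Fin n → ℂˣ) (i : Fin n) : eval x (Xinv i) = (x i : ℂ)⁻¹ := by
  rw [Xinv, eval_single, one_mul, Finset.prod_eq_single i (fun j _ hj => by simp [hj]) (by simp)]
  simp

theorem eval_C (x : Fin n → ℂˣ) (a : ℂ) : eval x (C a) = a :=
  eval x |>.commutes a

theorem eval_prod_pairFactor_ne_zero (x : Fin n → ℂˣ) {a : ℂ} (hx : ∀ i, ‖(x i : ℂ)‖ < ‖a‖)
    (ha : ‖a‖ < 1) : eval x (∏ i, pairFactor a i) ≠ 0 := by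
  rw [map_prod]
  refine Finset.prod_ne_zero_iff.mpr fun i _ => ?_
  rw [pairFactor, map_sub, map_add, eval_X, eval_Xinv, eval_C, sub_ne_zero]
  exact add_inv_ne_add_inv (x i).ne_zero (hx i) ha

/-! ### The action of `Wₙ` -/

def actAddEquiv (ε : Fin n → Bool) (π : Equiv.Perm (Fin n)) : (Fin n → ℤ) ≃+ (Fin n → ℤ) where
  toFun := actZ ε π
  invFun := actZ (ε ∘ π) π.symm
  left_inv α := by funext j; by_cases h : ε (π j) <;> simp [actZ, h]
  right_inv α := by funext j; by_cases h : ε j <;> simp [actZ, h]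
  map_add' α β := by funext j; simp only [actZ, Pi.add_apply]; ring

def wAct (ε : Fin n → Bool) (π : Equiv.Perm (Fin n)) : LaurentPoly n ≃ₐ[ℂ] LaurentPoly n :=
  domCongr ℂ ℂ (actAddEquiv ε π)

theorem wAct_single (ε : Fin n → Bool) (π : Equiv.Perm (Fin n)) (α : Fin n → ℤ) (r : ℂ) :
    wAct ε π (single α r) = single (actZ ε π α) r :=
  domCongr_single _ _ _

theorem winv_iff (f : LaurentPoly n) : WInv f.coeff ↔ ∀ ε π, wAct ε π f = f := by
  refine ⟨fun h ε π => ?_, fun h ε π α => ?_⟩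
  · ext β
    rw [wAct, coeff_domCongr]
    exact h (ε ∘ π) π.symm β
  · have := congr_arg (fun g : LaurentPoly n => g.coeff (actAddEquiv ε π α)) (h ε π)
    rw [wAct, coeff_domCongr, AddEquiv.symm_apply_apply] at this
    exact this.symm

theorem coeff_abs_of_winv {g : LaurentPoly n} (hg : WInv g.coeff) (α : Fin n → ℤ) :
    g.coeff |α| = g.coeff α := by
  convert hg (fun i => decide (α i < 0)) (Equiv.refl _) α using 2
  funext i
  by_cases h : α i < 0 <;> simp [actZ, h, abs_of_neg, abs_of_nonneg, not_lt.mp]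

theorem actZ_single (ε : Fin n → Bool) (π : Equiv.Perm (Fin n)) (i : Fin n) (k : ℤ) :
    actZ ε π (Pi.single i k) = Pi.single (π i) (if ε (π i) then -k else k) := by
  funext j
  rcases eq_or_ne j (π i) with rfl | hj
  · split_ifs <;> simp [actZ, *]
  · have : π.symm j ≠ i := fun h => hj (by rw [← h, π.apply_symm_apply])
    simp [actZ, hj, this]

theorem wAct_X (ε : Fin n → Bool) (π : Equiv.Perm (Fin n)) (i : Fin n) :
    wAct ε π (X i) = if ε (π i) then Xinv (π i) else X (π i) := by
  rw [X, wAct_single, actZ_single]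
  split_ifs <;> simp [X, Xinv, Pi.single_neg]

theorem wAct_Xinv (ε : Fin n → Bool) (π : Equiv.Perm (Fin n)) (i : Fin n) :
    wAct ε π (Xinv i) = if ε (π i) then X (π i) else Xinv (π i) := by
  rw [Xinv, wAct_single, ← Pi.single_neg, actZ_single]
  split_ifs <;> simp [X, Xinv, Pi.single_neg]

theorem wAct_prod_pairFactor (ε : Fin n → Bool) (π : Equiv.Perm (Fin n)) (a : ℂ) :
    wAct ε π (∏ i, pairFactor a i) = ∏ i, pairFactor a i := by
  have h : ∀ i, wAct ε π (pairFactor a i) = pairFactor a (π i) := fun i => by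
    rw [pairFactor, pairFactor, map_sub, map_add, wAct_X, wAct_Xinv, AlgEquiv.commutes]
    split_ifs <;> abel
  simp only [map_prod, h]
  exact Equiv.prod_comp π fun i => pairFactor a i

/-- Extends `π` by fixing `Fin.last m`. -/
def permSnoc (π : Equiv.Perm (Fin m)) : Equiv.Perm (Fin (m + 1)) :=
  finSuccEquivLast.symm.permCongr π.optionCongr

theorem permSnoc_symm_castSucc (π : Equiv.Perm (Fin m)) (j : Fin m) :
    (permSnoc π).symm j.castSucc = (π.symm j).castSucc := by
  change finSuccEquivLast.symm (π.optionCongr.symm (finSuccEquivLast j.castSucc)) = _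
  simp [finSuccEquivLast_castSucc, ← Equiv.optionCongr_symm, finSuccEquivLast_symm_some]

theorem permSnoc_symm_last (π : Equiv.Perm (Fin m)) :
    (permSnoc π).symm (Fin.last m) = Fin.last m := by
  change finSuccEquivLast.symm (π.optionCongr.symm (finSuccEquivLast (Fin.last m))) = _
  simp [finSuccEquivLast_last, ← Equiv.optionCongr_symm]

/-! ### Substituting a constant for one variable -/

/-- Substitutes `a` for `xᵢ` and renumbers the remaining variables. -/
def subst (i : Fin (m + 1)) (a : ℂˣ) : LaurentPoly (m + 1) →ₐ[ℂ] LaurentPoly m :=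
  lift ℂ _ _
    { toFun α := single (Fin.removeNth i α.toAdd) ((a ^ α.toAdd i : ℂˣ) : ℂ)
      map_one' := rfl
      map_mul' α β := by
        rw [single_mul_single, ← Units.val_mul, ← zpow_add]
        rfl }

theorem subst_single (i : Fin (m + 1)) (a : ℂˣ) (α : Fin (m + 1) → ℤ) (r : ℂ) :
    subst i a (single α r) = single (Fin.removeNth i α) (r * ((a ^ α i : ℂˣ) : ℂ)) := by
  rw [subst, lift_single]
  exact smul_single' _ _ _

theorem subst_X_self (i : Fin (m + 1)) (a : ℂˣ) : subst i a (X i) = C a := by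
  have : Fin.removeNth i (Pi.single i 1 : Fin (m + 1) → ℤ) = 0 := by
    funext k; simp [Fin.removeNth, Fin.succAbove_ne]
  rw [X, subst_single, this]
  simp

theorem subst_X_succAbove (i : Fin (m + 1)) (a : ℂˣ) (j : Fin m) :
    subst i a (X (i.succAbove j)) = X j := by
  have : Fin.removeNth i (Pi.single (i.succAbove j) 1 : Fin (m + 1) → ℤ) = Pi.single j 1 := by
    funext k; simp [Fin.removeNth, Pi.single_apply]
  rw [X, subst_single, this]
  simp [X]

theorem eval_subst (i : Fin (m + 1)) (a : ℂˣ) (y : Fin m → ℂˣ) (f : LaurentPoly (m + 1)) :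
    eval y (subst i a f) = eval (Fin.insertNth i a y) f := by
  suffices (eval y).comp (subst i a) = eval (Fin.insertNth i a y) from congr($this f)
  refine algHom_ext (fun α => ?_) (Subsingleton.elim _ _)
  simp only [AlgHom.comp_apply, subst_single, eval_single, Fin.prod_univ_succAbove _ i,
    Fin.insertNth_apply_same, Fin.insertNth_apply_succAbove, Fin.removeNth,
    Units.val_zpow_eq_zpow_val]
  ring

theorem supDegree_subst_le (i : Fin (m + 1)) (a : ℂˣ) (f : LaurentPoly (m + 1)) :
    (subst i a f).supDegree wtZ ≤ f.supDegree wtZ := by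
  rw [subst, lift_apply]
  refine supDegree_sum_le.trans (Finset.sup_le fun α hα => ?_)
  have hrem : wtZ (Fin.removeNth i α) ≤ wtZ α := by
    rw [wtZ, wtZ, Fin.sum_univ_succAbove _ i]
    exact Nat.le_add_left _ _
  change (f.coeff α • single (Fin.removeNth i α) _ : LaurentPoly m).supDegree wtZ ≤ _
  rw [smul_single', supDegree_single]
  split_ifs
  · exact bot_le
  · exact hrem.trans (Finset.le_sup hα)

theorem subst_last_wAct (a : ℂˣ) (ε : Fin m → Bool) (π : Equiv.Perm (Fin m))
    (f : LaurentPoly (m + 1)) :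
    subst (Fin.last m) a (wAct (Fin.snoc ε false) (permSnoc π) f) =
      wAct ε π (subst (Fin.last m) a f) := by
  suffices (subst (Fin.last m) a).comp (wAct (Fin.snoc ε false) (permSnoc π)).toAlgHom =
      (wAct ε π).toAlgHom.comp (subst (Fin.last m) a) from congr($this f)
  refine algHom_ext (fun α => ?_) (Subsingleton.elim _ _)
  simp only [AlgHom.comp_apply, AlgEquiv.coe_toAlgHom, wAct_single, subst_single]
  congr 2
  · funext j
    simp [actZ, Fin.removeNth, permSnoc_symm_castSucc]
  · simp [actZ, permSnoc_symm_last]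

theorem winv_subst_last (a : ℂˣ) {f : LaurentPoly (m + 1)} (hf : WInv f.coeff) :
    WInv (subst (Fin.last m) a f).coeff := by
  rw [winv_iff] at hf ⊢
  intro ε π
  rw [← subst_last_wAct, hf]

theorem X_sub_C_dvd_single_sub_C_zpow (i : Fin n) (a : ℂˣ) (k : ℤ) :
    X i - C a ∣ single (Pi.single i k) 1 - C ↑(a ^ k) := by
  let u : (LaurentPoly n)ˣ := (of ℂ _).toHomUnits (Multiplicative.ofAdd (Pi.single i 1))
  let v : (LaurentPoly n)ˣ := Units.map (C : ℂ →+* LaurentPoly n).toMonoidHom a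
  have hu : ((u ^ k : (LaurentPoly n)ˣ) : LaurentPoly n) = single (Pi.single i k) 1 := by
    rw [← map_zpow, MonoidHom.coe_toHomUnits, of_apply, toAdd_zpow, toAdd_ofAdd,
      ← Pi.single_smul', smul_eq_mul, mul_one]
  have hv : ((v ^ k : (LaurentPoly n)ˣ) : LaurentPoly n) = C ↑(a ^ k) := by
    rw [← map_zpow]
    rfl
  rw [← hu, ← hv]
  exact Units.sub_dvd_zpow_sub_zpow u v k

theorem X_sub_C_dvd_sub_subst (i : Fin (m + 1)) (a : ℂˣ) (f : LaurentPoly (m + 1)) :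
    X i - C a ∣ f - mapDomain (Fin.insertNth i (0 : ℤ)) (subst i a f) := by
  induction f using induction_linear with
  | zero => simp
  | add f g hf hg =>
    rw [map_add, mapDomain_add, add_sub_add_comm]
    exact dvd_add hf hg
  | single α r =>
    have hα : Function.update α i 0 + Pi.single i (α i) = α := by
      funext j
      by_cases h : j = i <;> simp [h]
    have hsplit : single α r - mapDomain (Fin.insertNth i (0 : ℤ)) (subst i a (single α r)) =
        single (Function.update α i 0) r * (single (Pi.single i (α i)) 1 - C ↑(a ^ α i)) := by
      rw [subst_single, mapDomain_single, Fin.insertNth_removeNth, mul_sub, single_mul_single,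
        C_apply, single_mul_single, hα, add_zero, mul_one]
    rw [hsplit]
    exact dvd_mul_of_dvd_right (X_sub_C_dvd_single_sub_C_zpow i a (α i)) _

theorem ker_subst (i : Fin (m + 1)) (a : ℂˣ) :
    RingHom.ker (subst i a) = Ideal.span {X i - C a} := by
  ext f
  rw [RingHom.mem_ker, Ideal.mem_span_singleton]
  constructor
  · intro h
    simpa [h] using X_sub_C_dvd_sub_subst i a f
  · rintro ⟨g, rfl⟩
    rw [map_mul, map_sub, subst_X_self, AlgHom.commutes, sub_self, zero_mul]

theorem X_sub_C_ne_zero (i : Fin n) (a : ℂˣ) : X i - C a ≠ 0 := by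
  intro h
  have := congr_arg (eval fun _ => -a) h
  rw [map_sub, eval_X, eval_C, map_zero, Units.val_neg, sub_eq_zero, neg_eq_iff_add_eq_zero,
    ← two_mul] at this
  simp at this

theorem prime_X_sub_C (i : Fin (m + 1)) (a : ℂˣ) : Prime (X i - C a) := by
  rw [← Ideal.span_singleton_prime (X_sub_C_ne_zero i a), ← ker_subst i a]
  exact RingHom.ker_isPrime _

theorem X_sub_C_dvd_X_sub_C_iff (i j : Fin (m + 1)) (a b : ℂˣ) :
    X i - C a ∣ X j - C b ↔ i = j ∧ a = b := by
  refine ⟨fun h => ?_, by rintro ⟨rfl, rfl⟩; rfl⟩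
  have h0 : subst i a (X j - C b) = 0 :=
    RingHom.mem_ker.mp (ker_subst i a ▸ Ideal.mem_span_singleton.mpr h)
  rw [map_sub, AlgHom.commutes] at h0
  rcases Fin.eq_self_or_eq_succAbove i j with rfl | ⟨k, rfl⟩
  · rw [subst_X_self, sub_eq_zero] at h0
    exact ⟨rfl, Units.val_injective ((algebraMap ℂ (LaurentPoly m)).injective h0)⟩
  · rw [subst_X_succAbove] at h0
    exact absurd h0 (X_sub_C_ne_zero k b)

/-! ### Factoring out `∏ᵢ (xᵢ + xᵢ⁻¹ - a - a⁻¹)` -/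

theorem X_sub_C_dvd_of_winv {f : LaurentPoly n} (hf : WInv f.coeff) {i₀ : Fin n} {a : ℂˣ}
    (h : X i₀ - C a ∣ f) (i : Fin n) : X i - C a ∣ f ∧ X i - C ↑a⁻¹ ∣ f := by
  rw [winv_iff] at hf
  constructor
  · have := map_dvd (wAct (fun _ => false) (Equiv.swap i₀ i)) h
    rwa [hf, map_sub, wAct_X, AlgEquiv.commutes, Equiv.swap_apply_left, if_neg Bool.false_ne_true]
      at this
  · have := map_dvd (wAct (fun j => decide (j = i)) (Equiv.swap i₀ i)) h
    rw [hf, map_sub, wAct_X, AlgEquiv.commutes, Equiv.swap_apply_left, decide_eq_true rfl,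
      if_pos rfl, Xinv_sub_C] at this
    exact dvd_of_mul_right_dvd this

theorem prod_X_mul_prod_pairFactor_dvd_of_winv {f : LaurentPoly (m + 1)} (hf : WInv f.coeff)
    {a : ℂˣ} (ha : a ≠ a⁻¹) {i₀ : Fin (m + 1)} (h : X i₀ - C a ∣ f) :
    (∏ i, X i) * ∏ i, pairFactor a i ∣ f := by
  let b : Bool → ℂˣ := fun s => if s then a else a⁻¹
  have hb : Function.Injective b := by
    intro s t hst
    cases s <;> cases t <;> simp_all [b, eq_comm]
  have hprod : ∏ x : Fin (m + 1) × Bool, (X x.1 - C ↑(b x.2)) =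
      (∏ i, X i) * ∏ i, pairFactor a i := by
    simp only [b, Fintype.prod_prod_type, Fintype.prod_bool, if_true, Bool.false_eq_true,
      if_false, ← Finset.prod_mul_distrib, X_mul_pairFactor]
  rw [← hprod]
  refine Finset.prod_dvd_of_prime (fun x _ => prime_X_sub_C _ _) ?_ fun x _ => ?_
  · intro x _ y _ hxy hdvd
    rw [X_sub_C_dvd_X_sub_C_iff] at hdvd
    exact hxy (Prod.ext hdvd.1 (hb hdvd.2))
  · obtain ⟨i, s⟩ := x
    cases s
    exacts [(X_sub_C_dvd_of_winv hf h i).2, (X_sub_C_dvd_of_winv hf h i).1]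

theorem coeff_pairFactor (a : ℂ) (i : Fin n) :
    (∀ x ∈ (pairFactor a i).coeff.support, x ≤ Pi.single i 1) ∧
      (pairFactor a i).coeff (Pi.single i 1) = 1 := by
  have hpos : (0 : Fin n → ℤ) ≤ Pi.single i 1 := Pi.single_nonneg.mpr zero_le_one
  have hne : (Pi.single i 1 : Fin n → ℤ) ≠ -Pi.single i 1 := fun h => by
    simpa using congr_fun h i
  have hcoeff : (pairFactor a i).coeff = Finsupp.single (Pi.single i 1) 1 +
      Finsupp.single (-Pi.single i 1) 1 - Finsupp.single 0 (a + a⁻¹) := rfl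
  refine ⟨fun x hx => ?_, by simp [hcoeff, hne.symm]⟩
  rw [Finsupp.mem_support_iff] at hx
  by_contra hlt
  have h₁ : x ≠ Pi.single i 1 := fun h => hlt h.le
  have h₂ : x ≠ -Pi.single i 1 := fun h => hlt (h ▸ neg_le_self hpos)
  have h₃ : x ≠ 0 := fun h => hlt (h ▸ hpos)
  simp [hcoeff, h₁.symm, h₂.symm, h₃.symm] at hx

theorem coeff_prod_pairFactor (a : ℂ) :
    (∀ x ∈ (∏ i, pairFactor a i : LaurentPoly n).coeff.support, x ≤ 1) ∧
      (∏ i, pairFactor a i : LaurentPoly n).coeff 1 = 1 := by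
  have key := coeff_prod_of_forall_le Finset.univ (pairFactor (n := n) a) (fun i => Pi.single i 1)
    fun i _ => (coeff_pairFactor a i).1
  rw [Finset.univ_sum_single (fun _ => (1 : ℤ))] at key
  simpa [(coeff_pairFactor a _).2, Pi.one_def] using key

theorem exists_winv_eq_prod_pairFactor_mul {f : LaurentPoly (m + 1)} (hf : WInv f.coeff)
    {a : ℂˣ} (ha : a ≠ a⁻¹) {i₀ : Fin (m + 1)} (h : X i₀ - C a ∣ f) :
    ∃ g : LaurentPoly (m + 1), WInv g.coeff ∧ f = (∏ i, pairFactor a i) * g := by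
  obtain ⟨k, hk⟩ := prod_X_mul_prod_pairFactor_dvd_of_winv hf ha h
  rw [mul_comm (∏ i, X i), mul_assoc] at hk
  refine ⟨(∏ i, X i) * k, ?_, hk⟩
  have hP : (∏ i, pairFactor (a : ℂ) i : LaurentPoly (m + 1)) ≠ 0 := fun h0 => by
    simpa [h0] using (coeff_prod_pairFactor (n := m + 1) a).2
  rw [winv_iff] at hf ⊢
  intro ε π
  have := hf ε π
  rw [hk, map_mul, wAct_prod_pairFactor] at this
  exact mul_left_cancel₀ hP this

/-- The coefficient of `x ^ (1 + |α|)` in the product, for `α` of maximal weight in the support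
of `g`, is the coefficient of `x ^ |α|` in `g`. -/
theorem supDegree_add_le_supDegree_prod_pairFactor_mul (a : ℂ) {g : LaurentPoly n}
    (hg : WInv g.coeff) (hg0 : g ≠ 0) :
    g.supDegree wtZ + n ≤ ((∏ i, pairFactor a i) * g).supDegree wtZ := by
  obtain ⟨α, hα, hdeg⟩ := exists_supDegree_mem_support wtZ hg0
  have hα0 : 0 ≤ |α| := abs_nonneg α
  have hwt : ∀ y ∈ g.coeff.support, ∑ i, y i ≤ ∑ i, |α| i := fun y hy => by
    rw [← wtZ_eq_sum hα0, wtZ_abs, ← hdeg]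
    exact (sum_le_wtZ y).trans (by exact_mod_cast Finset.le_sup (f := wtZ) hy)
  have huniq : UniqueAdd (∏ i, pairFactor a i).coeff.support g.coeff.support 1 |α| := by
    intro x y hx hy hxy
    have hx1 := (coeff_prod_pairFactor a).1 x hx
    have hsum := congr_arg (fun z => ∑ i, z i) hxy
    simp only [Pi.add_apply, Finset.sum_add_distrib] at hsum
    have hx1' : x = 1 := funext fun i => ((Finset.sum_eq_sum_iff_of_le fun i _ => hx1 i).mp
      (le_antisymm (Finset.sum_le_sum fun i _ => hx1 i) (by linarith [hwt y hy])) i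
      (Finset.mem_univ i))
    exact ⟨hx1', add_left_cancel (hx1' ▸ hxy)⟩
  have hcoeff : ((∏ i, pairFactor a i) * g).coeff (1 + |α|) ≠ 0 := by
    rw [coeff_mul_add_of_uniqueAdd huniq, (coeff_prod_pairFactor a).2, one_mul,
      coeff_abs_of_winv hg]
    exact Finsupp.mem_support_iff.mp hα
  have hwt1 : wtZ (1 + |α|) = wtZ α + n := by
    rw [add_comm, wtZ_add_one hα0, wtZ_abs]
  rw [hdeg, ← hwt1]
  exact Finset.le_sup (f := wtZ) (Finsupp.mem_support_iff.mpr hcoeff)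

/-! ### The vanishing theorem -/

theorem eval_eq_zero_of_eval_prod_pairFactor_mul_eq_zero {q a : ℂˣ} (hq : ‖(q : ℂ)‖ < 1)
    (ha : ‖(a : ℂ)‖ < 1) {τ : Fin n → ℂˣ} (hτa : ∀ i, ‖(τ i : ℂ)‖ ≤ ‖(a : ℂ)‖) {d : ℕ}
    {g : LaurentPoly n}
    (hv : ∀ μ, IsPartition μ → wtZ μ ≤ d →
      eval (fun i => q ^ μ i * τ i) ((∏ i, pairFactor a i) * g) = 0)
    {μ : Fin n → ℤ} (hμ : IsPartition μ) (hwμ : wtZ μ + n ≤ d) :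
    eval (fun i => q ^ μ i * (q * τ i)) g = 0 := by
  have hpt : (fun i => q ^ μ i * (q * τ i)) = fun i => q ^ (μ + 1) i * τ i := by
    funext i
    rw [Pi.add_apply, Pi.one_apply, zpow_add_one, mul_assoc]
  have hx : ∀ i, ‖((q ^ (μ + 1) i * τ i : ℂˣ) : ℂ)‖ < ‖(a : ℂ)‖ := fun i => by
    push_cast
    exact (norm_zpow_mul_lt q.ne_zero hq (τ i).ne_zero
      (add_pos_of_nonneg_of_pos (hμ.2 i) one_pos)).trans_le (hτa i)
  have := hv (μ + 1) (IsPartition.add_one hμ) (by rw [wtZ_add_one hμ.2]; exact hwμ)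
  rw [map_mul] at this
  rw [hpt]
  exact (mul_eq_zero.mp this).resolve_left (eval_prod_pairFactor_ne_zero _ hx ha)

theorem eq_zero_of_forall_eval_eq_zero {q : ℂˣ} (hq : ‖(q : ℂ)‖ < 1) :
    ∀ {n : ℕ} (d : ℕ) (τ : Fin n → ℂˣ), TauChain (fun i => (τ i : ℂ)) →
      ∀ f : LaurentPoly n, WInv f.coeff → f.supDegree wtZ ≤ d →
      (∀ μ, IsPartition μ → wtZ μ ≤ d → eval (fun i => q ^ μ i * τ i) f = 0) → f = 0
  | 0, d, τ, _, f, _, _, hv => by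
    have h0 := hv 0 ⟨fun i => i.elim0, fun i => i.elim0⟩ (by simp [wtZ])
    have hf : f = single 0 (f.coeff 0) := coeff_injective <| Finsupp.ext fun α => by
      rw [Subsingleton.elim α 0, coeff_single, Finsupp.single_eq_same]
    rw [hf, eval_single] at h0
    rw [hf, show f.coeff 0 = 0 by simpa using h0, single_zero]
  | m + 1, d, τ, hτ, f, hf, hd, hv => by
    induction d using Nat.strong_induction_on generalizing τ f with | _ d ihd =>
    set a := τ (Fin.last m)
    have ha : ‖(a : ℂ)‖ < 1 := hτ.2.2 _
    have hsubst : subst (Fin.last m) a f = 0 := by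
      refine eq_zero_of_forall_eval_eq_zero hq d (fun j => τ j.castSucc) (TauChain.castSucc hτ) _
        (winv_subst_last a hf) ((supDegree_subst_le _ _ _).trans hd) fun μ hμ hwμ => ?_
      rw [eval_subst, ← hv _ (IsPartition.snoc_zero hμ) (by rwa [wtZ_snoc_zero]),
        Fin.insertNth_last']
      congr 2
      funext i
      induction i using Fin.lastCases <;> simp [a]
    have hdvd : X (Fin.last m) - C a ∣ f := by
      simpa [hsubst] using X_sub_C_dvd_sub_subst (Fin.last m) a f
    have haa : a ≠ a⁻¹ := fun h => self_ne_inv_of_norm_lt_one a.ne_zero ha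
      (by rw [← Units.val_inv_eq_inv_val, ← h])
    obtain ⟨g, hg, rfl⟩ := exists_winv_eq_prod_pairFactor_mul hf haa hdvd
    by_cases hg0 : g = 0
    · rw [hg0, mul_zero]
    have hdeg := (supDegree_add_le_supDegree_prod_pairFactor_mul (a : ℂ) hg hg0).trans hd
    refine absurd (ihd (d - (m + 1)) (by omega) (fun i => q * τ i)
      (TauChain.mul_left hτ q.ne_zero hq) g hg (by omega) fun μ hμ hwμ => ?_) hg0
    exact eval_eq_zero_of_eval_prod_pairFactor_mul_eq_zero hq ha (TauChain.norm_le_last hτ) hv hμ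
      (by omega)

/-! ### Interpolation -/

def dominant (α : Fin n → ℤ) : Fin n → ℤ := Tuple.sortDesc |α|

theorem isPartition_dominant (α : Fin n → ℤ) : IsPartition (dominant α) :=
  ⟨Tuple.antitone_sortDesc _, fun _ => abs_nonneg α _⟩

theorem wtZ_dominant (α : Fin n → ℤ) : wtZ (dominant α) = wtZ α := by
  obtain ⟨σ, hσ⟩ := Tuple.exists_perm_sortDesc_eq |α|
  rw [dominant, hσ, wtZ_comp_perm, wtZ_abs]

theorem dominant_actZ (ε : Fin n → Bool) (π : Equiv.Perm (Fin n)) (α : Fin n → ℤ) :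
    dominant (actZ ε π α) = dominant α := by
  rw [dominant, abs_actZ, Tuple.sortDesc_comp_perm, dominant]

theorem dominant_eq_self {μ : Fin n → ℤ} (hμ : IsPartition μ) : dominant μ = μ := by
  rw [dominant, abs_of_nonneg (show 0 ≤ μ from hμ.2), Antitone.sortDesc_eq hμ.1]

def partitionsLE (n d : ℕ) : Set (Fin n → ℤ) := {μ | IsPartition μ ∧ wtZ μ ≤ d}

instance (n d : ℕ) : Finite (partitionsLE n d) :=
  ((finite_setOf_wtZ_le n d).subset fun _ hμ => hμ.2).to_subtype

def invariantLE (n d : ℕ) : Submodule ℂ ((Fin n → ℤ) →₀ ℂ) where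
  carrier := {f | WInv f ∧ ∀ α ∈ f.support, wtZ α ≤ d}
  add_mem' {f g} hf hg := ⟨fun ε π α => by simp [hf.1 ε π α, hg.1 ε π α], fun α hα =>
    (Finset.mem_union.mp (Finsupp.support_add hα)).elim (hf.2 α) (hg.2 α)⟩
  zero_mem' := ⟨fun _ _ _ => rfl, by simp⟩
  smul_mem' c f hf := ⟨fun ε π α => by simp [hf.1 ε π α], fun α hα =>
    hf.2 α (Finsupp.support_smul hα)⟩

def extendInvariant (n d : ℕ) : (partitionsLE n d → ℂ) →ₗ[ℂ] ((Fin n → ℤ) →₀ ℂ) where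
  toFun c := Finsupp.onFinset (finite_setOf_wtZ_le n d).toFinset
    (fun α => if h : wtZ α ≤ d then
      c ⟨dominant α, isPartition_dominant α, (wtZ_dominant α).trans_le h⟩ else 0)
    fun α hα => by
      rw [Set.Finite.mem_toFinset]
      by_contra h
      exact hα (dif_neg h)
  map_add' c c' := by
    ext α
    simp only [Finsupp.onFinset_apply, Finsupp.add_apply, Pi.add_apply]
    split_ifs <;> simp
  map_smul' r c := by
    ext α
    simp only [Finsupp.onFinset_apply, Finsupp.smul_apply, Pi.smul_apply, RingHom.id_apply]
    split_ifs <;> simp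

variable {d : ℕ}

theorem extendInvariant_apply (c : partitionsLE n d → ℂ) (α : Fin n → ℤ) :
    extendInvariant n d c α = if h : wtZ α ≤ d then
      c ⟨dominant α, isPartition_dominant α, (wtZ_dominant α).trans_le h⟩ else 0 :=
  rfl

theorem extendInvariant_mem (c : partitionsLE n d → ℂ) :
    extendInvariant n d c ∈ invariantLE n d := by
  refine ⟨fun ε π α => ?_, fun α hα => ?_⟩
  · simp only [extendInvariant_apply, wtZ_actZ, dominant_actZ]
  · by_contra h
    exact Finsupp.mem_support_iff.mp hα (dif_neg h)

theorem extendInvariant_apply_coe (c : partitionsLE n d → ℂ) (μ : partitionsLE n d) :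
    extendInvariant n d c μ = c μ := by
  rw [extendInvariant_apply, dif_pos μ.2.2]
  congr
  exact dominant_eq_self μ.2.1

theorem extendInvariant_injective : Function.Injective (extendInvariant n d) := fun c c' h =>
  funext fun μ => by rw [← extendInvariant_apply_coe c, h, extendInvariant_apply_coe]

def evalPartitions (q : ℂ) (τ : Fin n → ℂ) (d : ℕ) :
    ((Fin n → ℤ) →₀ ℂ) →ₗ[ℂ] (partitionsLE n d → ℂ) :=
  LinearMap.pi fun μ => Finsupp.linearCombination ℂ fun α => ∏ i, (q ^ μ.1 i * τ i) ^ α i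

theorem evalPartitions_apply (q : ℂ) (τ : Fin n → ℂ) (f : (Fin n → ℤ) →₀ ℂ)
    (μ : partitionsLE n d) : evalPartitions q τ d f μ = evalL f fun i => q ^ μ.1 i * τ i :=
  rfl

theorem eq_zero_of_evalPartitions_eq_zero {q : ℂ} (hq0 : q ≠ 0) (hq1 : ‖q‖ < 1)
    {τ : Fin n → ℂ} (hτ : TauChain τ) {f : (Fin n → ℤ) →₀ ℂ} (hf : f ∈ invariantLE n d)
    (hv : evalPartitions q τ d f = 0) : f = 0 := by
  let τu i := Units.mk0 (τ i) (norm_pos_iff.mp (hτ.1 i))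
  refine ofCoeff_eq_zero.mp <| eq_zero_of_forall_eval_eq_zero (q := Units.mk0 q hq0) hq1 d τu hτ
    (ofCoeff f) hf.1 (Finset.sup_le hf.2) fun μ hμ hw => ?_
  have := congr_fun hv ⟨μ, hμ, hw⟩
  rw [evalPartitions_apply, Pi.zero_apply] at this
  rw [← evalL_eq_eval, ← this]
  push_cast [τu]
  rfl

end BCInterpolation

open BCInterpolation in
theorem stmt6_general {n : ℕ} (d : ℕ)
    (q : ℂ) (hq0 : 0 < ‖q‖) (hq1 : ‖q‖ < 1)
    (τ : Fin n → ℂ) (hτ : TauChain τ) (fb : (Fin n → ℤ) → ℂ) :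
    ∃! f : (Fin n → ℤ) →₀ ℂ,
      WInv f ∧ (∀ α ∈ f.support, wtZ α ≤ d) ∧
      ∀ μ : Fin n → ℤ, IsPartition μ → wtZ μ ≤ d →
        evalL f (fun i => q ^ μ i * τ i) = fb μ := by
  obtain ⟨f, ⟨hfV, hfE⟩, huniq⟩ := Submodule.existsUnique_mem_and_apply_eq
    extendInvariant_mem extendInvariant_injective
    (fun f hf hv => eq_zero_of_evalPartitions_eq_zero (norm_pos_iff.mp hq0) hq1 hτ hf hv)
    (fun μ : partitionsLE n d => fb μ)
  refine ⟨f, ⟨hfV.1, hfV.2, fun μ hμ hw => congr_fun hfE ⟨μ, hμ, hw⟩⟩, ?_⟩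
  rintro g ⟨hg, hgd, hgv⟩
  exact huniq g ⟨⟨hg, hgd⟩, funext fun μ => hgv μ μ.2.1 μ.2.2⟩

/-- Symmetric interpolation theorem: for every function `f̄` on partitions of length
`≤ n` and weight `≤ d` there is a unique `Wₙ`-invariant Laurent polynomial `f` of
degree `≤ d` with `f(μ̄) = f̄(μ)` for all such `μ`, where `μ̄ᵢ = q^{μᵢ} τᵢ`. -/
theorem stmt6 {n : ℕ} (hn : 1 ≤ n) (d : ℕ)
    (q : ℂ) (hq0 : 0 < ‖q‖) (hq1 : ‖q‖ < 1)
    (τ : Fin n → ℂ) (hτ : TauChain τ) (fb : (Fin n → ℤ) → ℂ) :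
    ∃! f : (Fin n → ℤ) →₀ ℂ,
      WInv f ∧ (∀ α ∈ f.support, wtZ α ≤ d) ∧
      ∀ μ : Fin n → ℤ, IsPartition μ → wtZ μ ≤ d →
        evalL f (fun i => q ^ μ i * τ i) = fb μ :=
  stmt6_general d q hq0 hq1 τ hτ fb
end
end

section
/- Let $0 < |q| < 1$ and $0 < |s| < 1$. For $m \in \mathbb{Z}_{\ge 0}$, the Laurent polynomial $R_m(x) := \dfrac{(sx;q)_m (sx^{-1};q)_m}{(q^m s^2;q)_m (q^{-m};q)_m}$ in one variable $x$ is invariant under $x \mapsto x^{-1}$, has degree $m$, and satisfies $R_m(q^k s) = \delta_{m,k}$ for $k = 0, 1, \ldots, m$. -/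
/-!
The map `x ↦ x⁻¹` swaps the two `q`-shifted factorials in the numerator of `R_m`. Multiplied by
`x^m`, that numerator becomes the polynomial `∏ (1 - q^i s x) · ∏ (x - q^i s)` of degree exactly
`2m`, so `R_m` is a Laurent polynomial with exponents in `[-m, m]`, reaching `m`. At `x = q^k s`
the factor `(s x⁻¹; q)_m` contains `1 - q^k · q^{-k} = 0` when `k < m`, while for `k = m` the
numerator equals the denominator, which does not vanish because `|q|, |s| < 1`.
-/

noncomputable section
open Finset

/-- The `q`-shifted factorial `(a;q)_k = (1-a)(1-qa)⋯(1-q^{k-1}a)`. -/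
def qPoch (q a : ℂ) (k : ℕ) : ℂ := ∏ i ∈ Finset.range k, (1 - q ^ i * a)

/-- The one-variable symmetric interpolation polynomial
`R_m(x) = (sx;q)_m (sx⁻¹;q)_m / ((q^m s²;q)_m (q^{-m};q)_m)`. -/
def Rone (q s : ℂ) (m : ℕ) (x : ℂ) : ℂ :=
  (qPoch q (s * x) m * qPoch q (s * x⁻¹) m) /
    (qPoch q (q ^ m * s ^ 2) m * qPoch q (q ^ (-(m : ℤ))) m)

/-- The one-variable nonsymmetric interpolation polynomial of degree `m ≥ 0`:
`G_m(x) = (qsx;q)_m (sx⁻¹;q)_m / ((q^{1+m} s²;q)_m (q^{-m};q)_m)`. -/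
def Gone (q s : ℂ) (m : ℕ) (x : ℂ) : ℂ :=
  (qPoch q (q * s * x) m * qPoch q (s * x⁻¹) m) /
    (qPoch q (q ^ (1 + m) * s ^ 2) m * qPoch q (q ^ (-(m : ℤ))) m)

/-- The one-variable nonsymmetric interpolation polynomial of degree `-m`, `m > 0`:
`G_{-m}(x) = q^m s x (qsx;q)_{m-1} (sx⁻¹;q)_{m+1} / ((q^m s²;q)_{m+1} (q^{1-m};q)_{m-1})`. -/
def GnegOne (q s : ℂ) (m : ℕ) (x : ℂ) : ℂ :=
  (q ^ m * s * x * qPoch q (q * s * x) (m - 1) * qPoch q (s * x⁻¹) (m + 1)) /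
    (qPoch q (q ^ m * s ^ 2) (m + 1) * qPoch q (q ^ (1 - (m : ℤ))) (m - 1))

/-- Evaluation of a one-variable Laurent polynomial. -/
def eval1 (c : ℤ →₀ ℂ) (x : ℂ) : ℂ := c.sum fun j a => a * x ^ j

open Polynomial

lemma qPoch_eq_zero_iff (q a : ℂ) (k : ℕ) : qPoch q a k = 0 ↔ ∃ i < k, q ^ i * a = 1 := by
  simp only [qPoch, Finset.prod_eq_zero_iff, Finset.mem_range, sub_eq_zero, @eq_comm _ (1 : ℂ)]

lemma qPoch_ne_zero_of_norm_lt_one {q a : ℂ} (hq : ‖q‖ ≤ 1) (ha : ‖a‖ < 1) (k : ℕ) :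
    qPoch q a k ≠ 0 := by
  rintro h
  obtain ⟨i, -, hi⟩ := (qPoch_eq_zero_iff q a k).1 h
  have : ‖q‖ ^ i * ‖a‖ < 1 :=
    lt_of_le_of_lt (mul_le_of_le_one_left (norm_nonneg a) (pow_le_one₀ (norm_nonneg q) hq)) ha
  simp [← norm_pow, ← norm_mul, hi] at this

lemma qPoch_zpow_neg_ne_zero {q : ℂ} (hq0 : q ≠ 0) (hq1 : ‖q‖ ≠ 1) (m : ℕ) :
    qPoch q (q ^ (-(m : ℤ))) m ≠ 0 := by
  rintro h
  obtain ⟨i, hi, hq⟩ := (qPoch_eq_zero_iff _ _ m).1 h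
  have : q ^ (m - i) = 1 := by
    rw [zpow_neg, zpow_natCast, mul_inv_eq_one₀ (pow_ne_zero _ hq0)] at hq
    rw [pow_sub₀ q hq0 hi.le, ← hq, mul_inv_cancel₀ (pow_ne_zero _ hq0)]
  have := congrArg norm this
  rw [norm_pow, norm_one, pow_eq_one_iff_of_nonneg (norm_nonneg q) (by omega)] at this
  exact hq1 this

lemma qPoch_mul_qPoch_zpow_neg_ne_zero {q s : ℂ} (hq0 : q ≠ 0) (hq1 : ‖q‖ < 1) (hs1 : ‖s‖ < 1)
    (m : ℕ) : qPoch q (q ^ m * s ^ 2) m * qPoch q (q ^ (-(m : ℤ))) m ≠ 0 := by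
  refine mul_ne_zero (qPoch_ne_zero_of_norm_lt_one hq1.le ?_ m)
    (qPoch_zpow_neg_ne_zero hq0 hq1.ne m)
  rw [norm_mul, norm_pow, norm_pow]
  exact mul_lt_one_of_nonneg_of_lt_one_right (pow_le_one₀ (norm_nonneg q) hq1.le) (by positivity)
    (pow_lt_one₀ (norm_nonneg s) hs1 two_ne_zero)

lemma Rone_inv (q s : ℂ) (m : ℕ) (x : ℂ) : Rone q s m x⁻¹ = Rone q s m x := by
  rw [Rone, Rone, inv_inv, mul_comm (qPoch q (s * x⁻¹) m)]

lemma Rone_pow_mul_eq_zero_of_lt {q s : ℂ} (hq : q ≠ 0) (hs : s ≠ 0) {k m : ℕ} (hk : k < m) :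
    Rone q s m (q ^ k * s) = 0 := by
  have hvanish : qPoch q (s * (q ^ k * s)⁻¹) m = 0 :=
    (qPoch_eq_zero_iff _ _ m).2 ⟨k, hk, by field_simp⟩
  rw [Rone, hvanish, mul_zero, zero_div]

lemma Rone_pow_mul_eq_one {q s : ℂ} (hq0 : q ≠ 0) (hq1 : ‖q‖ < 1) (hs0 : s ≠ 0) (hs1 : ‖s‖ < 1)
    (m : ℕ) : Rone q s m (q ^ m * s) = 1 := by
  have h1 : s * (q ^ m * s) = q ^ m * s ^ 2 := by ring
  have h2 : s * (q ^ m * s)⁻¹ = q ^ (-(m : ℤ)) := by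
    rw [zpow_neg, zpow_natCast]
    field_simp
  rw [Rone, h1, h2, div_self (qPoch_mul_qPoch_zpow_neg_ne_zero hq0 hq1 hs1 m)]

lemma one_sub_C_mul_X_ne_zero {R : Type*} [CommRing R] [Nontrivial R] (a : R) :
    (1 - C a * X : R[X]) ≠ 0 := fun h => by simpa using congrArg (eval 0) h

lemma natDegree_prod_one_sub_C_mul_X {R ι : Type*} [CommRing R] [IsDomain R] (t : Finset ι)
    (a : ι → R) (ha : ∀ i ∈ t, a i ≠ 0) : (∏ i ∈ t, (1 - C (a i) * X)).natDegree = #t := by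
  have hlinear : ∀ i ∈ t, (1 - C (a i) * X).natDegree = 1 := fun i hi => by
    rw [show (1 - C (a i) * X : R[X]) = C (-a i) * X + C 1 by rw [map_neg, map_one]; ring]
    exact natDegree_linear (neg_ne_zero.2 (ha i hi))
  rw [natDegree_prod _ _ fun i _ => one_sub_C_mul_X_ne_zero (a i), sum_congr rfl hlinear,
    sum_const, smul_eq_mul, mul_one]

lemma eval_prod_one_sub_C_mul_X (q a x : ℂ) (m : ℕ) :
    (∏ i ∈ range m, (1 - C (q ^ i * a) * X)).eval x = qPoch q (a * x) m := by
  simp only [eval_prod, eval_sub, eval_one, eval_mul, eval_C, eval_X, qPoch, mul_assoc]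

lemma eval_prod_X_sub_C (q a : ℂ) {x : ℂ} (hx : x ≠ 0) (m : ℕ) :
    (∏ i ∈ range m, (X - C (q ^ i * a))).eval x = x ^ m * qPoch q (a * x⁻¹) m := by
  rw [eval_prod, qPoch, show x ^ m = x ^ #(range m) by rw [card_range], pow_card_mul_prod]
  refine prod_congr rfl fun i _ => ?_
  simp only [eval_sub, eval_X, eval_C]
  field_simp

lemma exists_laurent_eq_eval_div_pow (p : ℂ[X]) (hp0 : p ≠ 0) {m : ℕ} (hp : p.natDegree = 2 * m) :
    ∃ c : ℤ →₀ ℂ, (∀ j ∈ c.support, j.natAbs ≤ m) ∧ (∃ j ∈ c.support, j.natAbs = m) ∧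
      ∀ x : ℂ, x ≠ 0 → eval1 c x = p.eval x / x ^ m := by
  let e : ℕ ↪ ℤ := ⟨fun n => (n : ℤ) - m, fun a b h => by simpa using h⟩
  refine ⟨Finsupp.embDomain e p.toFinsupp.coeff, fun j hj => ?_, ⟨m, ?_, by simp⟩, fun x hx => ?_⟩
  · rw [Finsupp.support_embDomain, mem_map] at hj
    obtain ⟨n, hn, rfl⟩ := hj
    have := le_natDegree_of_mem_supp n hn
    change ((n : ℤ) - m).natAbs ≤ m
    omega
  · rw [Finsupp.support_embDomain, mem_map]
    refine ⟨2 * m, ?_, by change ((2 * m : ℕ) : ℤ) - m = m; lia⟩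
    rw [← hp]
    exact natDegree_mem_support_of_nonzero hp0
  · rw [eval1, Finsupp.sum_embDomain, eval_eq_sum, Polynomial.sum, Finsupp.sum, sum_div]
    refine sum_congr rfl fun n _ => ?_
    change _ * x ^ ((n : ℤ) - m) = _
    rw [zpow_sub₀ hx, zpow_natCast, zpow_natCast, mul_div_assoc]
    rfl

lemma exists_polynomial_eval_div_pow_eq_Rone {q s : ℂ} (hq0 : q ≠ 0) (hq1 : ‖q‖ < 1) (hs0 : s ≠ 0)
    (hs1 : ‖s‖ < 1) (m : ℕ) :
    ∃ p : ℂ[X], p ≠ 0 ∧ p.natDegree = 2 * m ∧ ∀ x : ℂ, x ≠ 0 → p.eval x / x ^ m = Rone q s m x := by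
  set d := qPoch q (q ^ m * s ^ 2) m * qPoch q (q ^ (-(m : ℤ))) m with hd_def
  have hd : d⁻¹ ≠ 0 := inv_ne_zero (qPoch_mul_qPoch_zpow_neg_ne_zero hq0 hq1 hs1 m)
  set A : ℂ[X] := ∏ i ∈ range m, (1 - C (q ^ i * s) * X)
  set B : ℂ[X] := ∏ i ∈ range m, (X - C (q ^ i * s))
  have hA0 : A ≠ 0 := prod_ne_zero_iff.2 fun i _ => one_sub_C_mul_X_ne_zero _
  have hB0 : B ≠ 0 := (monic_prod_of_monic _ _ fun i _ => monic_X_sub_C _).ne_zero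
  have hA : A.natDegree = m :=
    (natDegree_prod_one_sub_C_mul_X (range m) (fun i => q ^ i * s)
      fun i _ => mul_ne_zero (pow_ne_zero i hq0) hs0).trans (card_range m)
  have hB : B.natDegree = m := (natDegree_finsetProd_X_sub_C_eq_card _ _).trans (card_range m)
  refine ⟨C d⁻¹ * (A * B), mul_ne_zero (C_ne_zero.2 hd) (mul_ne_zero hA0 hB0), ?_, fun x hx => ?_⟩
  · rw [natDegree_C_mul hd, natDegree_mul hA0 hB0, hA, hB, two_mul]
  · rw [eval_mul, eval_mul, eval_C, eval_prod_one_sub_C_mul_X, eval_prod_X_sub_C q s hx, Rone,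
      ← hd_def]
    field_simp

/-- `R_m` is invariant under `x ↦ x⁻¹`, is a Laurent polynomial of degree `m`,
and satisfies `R_m(q^k s) = δ_{m,k}` for `0 ≤ k ≤ m`. -/
theorem stmt7 (q s : ℂ) (hq0 : 0 < ‖q‖) (hq1 : ‖q‖ < 1)
    (hs0 : 0 < ‖s‖) (hs1 : ‖s‖ < 1) (m : ℕ) :
    (∀ x : ℂ, x ≠ 0 → Rone q s m x⁻¹ = Rone q s m x) ∧
    (∃ c : ℤ →₀ ℂ, (∀ j ∈ c.support, j.natAbs ≤ m) ∧ (∃ j ∈ c.support, j.natAbs = m) ∧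
      ∀ x : ℂ, x ≠ 0 → eval1 c x = Rone q s m x) ∧
    ∀ k : ℕ, k ≤ m → Rone q s m (q ^ k * s) = if k = m then 1 else 0 := by
  have hq : q ≠ 0 := norm_pos_iff.1 hq0
  have hs : s ≠ 0 := norm_pos_iff.1 hs0
  refine ⟨fun x _ => Rone_inv q s m x, ?_, fun k hk => ?_⟩
  · obtain ⟨p, hp0, hpdeg, hpeval⟩ := exists_polynomial_eval_div_pow_eq_Rone hq hq1 hs hs1 m
    obtain ⟨c, hsupp, hdeg, heval⟩ := exists_laurent_eq_eval_div_pow p hp0 hpdeg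
    exact ⟨c, hsupp, hdeg, fun x hx => (heval x hx).trans (hpeval x hx)⟩
  · rcases hk.lt_or_eq with hk | rfl
    · rw [if_neg hk.ne, Rone_pow_mul_eq_zero_of_lt hq hs hk]
    · rw [if_pos rfl, Rone_pow_mul_eq_one hq hq1 hs hs1]
end
end

section
/- Let $0 < |q| < 1$ and $0 < |s| < 1$. For every $m \in \mathbb{Z}_{\ge 0}$ the one-variable interpolation polynomials satisfy $R_m(x;q,s) = G_m(x;q,s) + G_{-m}(x;q,s)$ (with $G_0 := R_0 = 1$ when $m = 0$), where $R_m(x;q,s) = \frac{(sx,sx^{-1};q)_m}{(q^m s^2, q^{-m};q)_m}$, $G_m(x;q,s) = \frac{(qsx, sx^{-1};q)_m}{(q^{1+m}s^2, q^{-m};q)_m}$, and for $m>0$, $G_{-m}(x;q,s) = \frac{q^m s x (qsx;q)_{m-1}(sx^{-1};q)_{m+1}}{(q^m s^2;q)_{m+1}(q^{1-m};q)_{m-1}}$. -/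
noncomputable section
open Finset

/-! Peeling one factor off each `q`-shifted factorial writes `R_{n+1}`, `G_{n+1}` and
`G_{-(n+1)}` as one common factor times a rational function of `t = q^{n+1}`, `s` and `x`, so the
theorem reduces to the identity
`(1 - sx)(1 - t²s²) = (1 - tsx)(1 - ts²) + (tsx - t²s²)(1 - t⁻¹)`.
Since `|q|, |s| < 1`, the denominators `1 - ts²`, `1 - t²s²` and `1 - t⁻¹` of the rational
functions do not vanish. -/

lemma qPoch_succ (q a : ℂ) (k : ℕ) :
    qPoch q a (k + 1) = qPoch q a k * (1 - q ^ k * a) :=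
  prod_range_succ _ _

lemma qPoch_succ' (q a : ℂ) (k : ℕ) :
    qPoch q a (k + 1) = (1 - a) * qPoch q (q * a) k := by
  rw [qPoch, prod_range_succ', pow_zero, one_mul, mul_comm]
  congr 1
  refine prod_congr rfl fun i _ => ?_
  ring

lemma qPoch_succ_zpow_neg {q : ℂ} (hq : q ≠ 0) (n : ℕ) :
    qPoch q (q ^ (-((n + 1 : ℕ) : ℤ))) (n + 1) =
      (1 - (q ^ (n + 1))⁻¹) * qPoch q (q ^ (-(n : ℤ))) n := by
  rw [qPoch_succ', zpow_neg, zpow_natCast, ← zpow_natCast, ← zpow_neg, ← zpow_one_add₀ hq]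
  congr 3
  push_cast
  ring

-- No nonvanishing is needed for this factor: `a * b / (c * d) = a / c * (b / d)` also when `c = 0`.
def interpCommonFactor (q s : ℂ) (n : ℕ) (x : ℂ) : ℂ :=
  qPoch q (q * s * x) n * qPoch q (s * x⁻¹) (n + 1) /
    (qPoch q (q ^ (n + 2) * s ^ 2) n * qPoch q (q ^ (-(n : ℤ))) n)

lemma rone_succ {q : ℂ} (hq : q ≠ 0) (s : ℂ) (n : ℕ) (x : ℂ) :
    Rone q s (n + 1) x = interpCommonFactor q s n x *
      ((1 - s * x) / ((1 - q ^ (n + 1) * s ^ 2) * (1 - (q ^ (n + 1))⁻¹))) := by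
  rw [Rone, interpCommonFactor, ← mul_div_mul_comm, qPoch_succ_zpow_neg hq,
    qPoch_succ' _ (s * x), qPoch_succ' _ (q ^ (n + 1) * s ^ 2), ← mul_assoc q,
    show q * (q ^ (n + 1) * s ^ 2) = q ^ (n + 2) * s ^ 2 by ring]
  ring

lemma gone_succ {q : ℂ} (hq : q ≠ 0) (s : ℂ) (n : ℕ) (x : ℂ) :
    Gone q s (n + 1) x = interpCommonFactor q s n x *
      ((1 - q ^ (n + 1) * (s * x)) /
        ((1 - (q ^ (n + 1)) ^ 2 * s ^ 2) * (1 - (q ^ (n + 1))⁻¹))) := by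
  rw [Gone, interpCommonFactor, ← mul_div_mul_comm, qPoch_succ_zpow_neg hq,
    qPoch_succ _ (q * s * x), show 1 + (n + 1) = n + 2 by ring, qPoch_succ _ (q ^ (n + 2) * s ^ 2)]
  ring

lemma gnegOne_succ (q s : ℂ) (n : ℕ) (x : ℂ) :
    GnegOne q s (n + 1) x = interpCommonFactor q s n x *
      (q ^ (n + 1) * s * x * (1 - q ^ (n + 1) * (s * x⁻¹)) /
        ((1 - q ^ (n + 1) * s ^ 2) * (1 - (q ^ (n + 1)) ^ 2 * s ^ 2))) := by
  have hexp : (1 : ℤ) - ((n + 1 : ℕ) : ℤ) = -(n : ℤ) := by push_cast; ring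
  rw [GnegOne, interpCommonFactor, Nat.add_sub_cancel, hexp, ← mul_div_mul_comm,
    qPoch_succ _ (s * x⁻¹) (n + 1), qPoch_succ' _ (q ^ (n + 1) * s ^ 2) (n + 1),
    show q * (q ^ (n + 1) * s ^ 2) = q ^ (n + 2) * s ^ 2 by ring,
    qPoch_succ _ (q ^ (n + 2) * s ^ 2)]
  ring

lemma rone_factor_eq_gone_factor_add_gnegOne_factor {K : Type*} [Field K] {t s x : K}
    (hx : x ≠ 0) (ht₀ : t ≠ 0) (ht₁ : t ≠ 1) (h₁ : 1 - t * s ^ 2 ≠ 0) (h₂ : 1 - t ^ 2 * s ^ 2 ≠ 0) :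
    (1 - s * x) / ((1 - t * s ^ 2) * (1 - t⁻¹)) =
      (1 - t * (s * x)) / ((1 - t ^ 2 * s ^ 2) * (1 - t⁻¹)) +
        t * s * x * (1 - t * (s * x⁻¹)) / ((1 - t * s ^ 2) * (1 - t ^ 2 * s ^ 2)) := by
  have h₃ : 1 - t⁻¹ ≠ 0 := sub_ne_zero.mpr fun h => ht₁ (inv_eq_one.mp h.symm)
  rw [div_add_div _ _ (mul_ne_zero h₂ h₃) (mul_ne_zero h₁ h₂),
    div_eq_div_iff (mul_ne_zero h₁ h₃) (mul_ne_zero (mul_ne_zero h₂ h₃) (mul_ne_zero h₁ h₂))]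
  field_simp
  ring

theorem stmt10_general (q s : ℂ) (hq0 : 0 < ‖q‖) (hq1 : ‖q‖ < 1)
    (hs1 : ‖s‖ < 1) :
    (∀ x : ℂ, x ≠ 0 → Rone q s 0 x = Gone q s 0 x) ∧
    ∀ m : ℕ, 0 < m → ∀ x : ℂ, x ≠ 0 →
      Rone q s m x = Gone q s m x + GnegOne q s m x := by
  refine ⟨fun x _ => by simp [Rone, Gone, qPoch], fun m hm x hx => ?_⟩
  obtain ⟨n, rfl⟩ := Nat.exists_eq_add_one_of_ne_zero hm.ne'
  have hq : q ≠ 0 := norm_pos_iff.mp hq0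
  have ne_one {z : ℂ} (h : ‖z‖ < 1) : z ≠ 1 :=
    ne_of_apply_ne (‖·‖) (by rw [norm_one]; exact h.ne)
  have ht : ‖q ^ (n + 1)‖ < 1 := by
    rw [norm_pow]; exact pow_lt_one₀ (norm_nonneg q) hq1 n.succ_ne_zero
  have ht2 : ‖(q ^ (n + 1)) ^ 2‖ < 1 := by
    rw [norm_pow]; exact pow_lt_one₀ (norm_nonneg _) ht two_ne_zero
  have hs2 : ‖s ^ 2‖ ≤ 1 := by rw [norm_pow]; exact pow_le_one₀ (norm_nonneg s) hs1.le
  have one_sub_mul_ne {z : ℂ} (h : ‖z‖ < 1) : 1 - z * s ^ 2 ≠ 0 := by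
    refine sub_ne_zero.mpr (ne_one ?_).symm
    rw [norm_mul]; exact mul_lt_one_of_nonneg_of_lt_one_left (norm_nonneg z) h hs2
  rw [rone_succ hq, gone_succ hq, gnegOne_succ, ← mul_add,
    rone_factor_eq_gone_factor_add_gnegOne_factor hx (pow_ne_zero _ hq) (ne_one ht)
      (one_sub_mul_ne ht) (one_sub_mul_ne ht2)]

/-- For all `m ≥ 0`, `R_m = G_m + G_{-m}` (with the identity reading `R_0 = G_0 = 1`
when `m = 0`). -/
theorem stmt10 (q s : ℂ) (hq0 : 0 < ‖q‖) (hq1 : ‖q‖ < 1)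
    (hs0 : 0 < ‖s‖) (hs1 : ‖s‖ < 1) :
    (∀ x : ℂ, x ≠ 0 → Rone q s 0 x = Gone q s 0 x) ∧
    ∀ m : ℕ, 0 < m → ∀ x : ℂ, x ≠ 0 →
      Rone q s m x = Gone q s m x + GnegOne q s m x :=
  stmt10_general q s hq0 hq1 hs1
end
end

section
/- Let $0 < |q| < 1$, $\tau \in \mathbb{C}^n$ with $0 < |\tau_1| < \cdots < |\tau_n| < 1$, and $\alpha \in \mathbb{Z}^n$. Define $\overline{\alpha}_i := q^{\alpha_i}(\tau_{\pi_\alpha^{-1}(i)})^{\mathrm{sgn}(\alpha_i)}$, where $\pi_\alpha \in S_n$ is the unique permutation with $\pi_\alpha^{-1}(i) < \pi_\alpha^{-1}(j)$ for $i<j$ iff $|\alpha_i| > |\alpha_j|$ or $0 \le \alpha_i = \pm\alpha_j$. If $1 \le j \le n$ and $s_j\alpha \ne \alpha$, then $\mathbf{s_j}\overline{\alpha} = \overline{s_j\alpha}$, where for $j < n$ the action $\mathbf{s_j}$ swaps coordinates $j$ and $j+1$ of a point in $(\mathbb{C}^*)^n$, and $\mathbf{s_n}$ inverts the $n$-th coordinate.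 -/
noncomputable section

/-- The nonsymmetric interpolation point
`ᾱᵢ = q^{αᵢ} (τ_{π_α⁻¹(i)})^{sgn(αᵢ)}`, where `sgn a = 1` if `a ≥ 0`, `-1` else. -/
def ptbarA {n : ℕ} (q : ℂ) (τ : Fin n → ℂ) (α : Fin n → ℤ)
    (π : Equiv.Perm (Fin n)) : Fin n → ℂ :=
  fun i => q ^ α i * (if 0 ≤ α i then τ (π.symm i) else (τ (π.symm i))⁻¹)

/-- The simple reflection `s_j` acting multiplicatively on `(ℂ*)ⁿ`:
for `j+1 < n` swap coordinates `j, j+1`; for `j` last, invert the last coordinate. -/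
def sjC {n : ℕ} (j : Fin n) (x : Fin n → ℂ) : Fin n → ℂ :=
  if h : (j : ℕ) + 1 < n then x ∘ (Equiv.swap j ⟨(j : ℕ) + 1, h⟩)
  else Function.update x j (x j)⁻¹

/-! The Sahi permutation is determined by the relative order it induces, since an order
automorphism of `Fin n` is trivial. For `j < n`, the swap `s_j` with `α_j ≠ α_{j+1}` reverses the
Sahi order of the pair `(j, j+1)` and keeps the relative position of every other pair, so
`π_{s_j α}⁻¹ = π_α⁻¹ ∘ s_j` and `ᾱ` is permuted accordingly. For `s_n`, the defining condition sees
`α_n` only through `±α_n`, so `π` is unchanged, and negating `α_n ≠ 0` inverts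
`q^{α_n} τ^{±1}`. -/

open Equiv Function

theorem Equiv.Perm.eq_of_symm_lt_symm_iff {ι : Type*} [LinearOrder ι] [WellFoundedLT ι]
    {π π' : Perm ι} (h : ∀ i k, i < k → (π.symm i < π.symm k ↔ π'.symm i < π'.symm k)) :
    π = π' := by
  have hlt : ∀ i k, π.symm i < π.symm k → π'.symm i < π'.symm k := by
    intro i k hik
    rcases lt_trichotomy i k with hlt | rfl | hgt
    · exact (h i k hlt).1 hik
    · exact absurd hik (lt_irrefl _)
    · refine lt_of_le_of_ne (not_lt.1 fun hki => ?_) (π'.symm.injective.ne hgt.ne')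
      exact hik.not_gt ((h k i hgt).2 hki)
  have hmono : StrictMono (π.trans π'.symm) := fun a b hab =>
    hlt (π a) (π b) (by simpa using hab)
  have hid := congrArg DFunLike.coe
    (Subsingleton.elim (hmono.orderIsoOfSurjective _ (π.trans π'.symm).surjective)
      (OrderIso.refl ι))
  ext x
  exact π'.symm_apply_eq.1 (by simpa using congrFun hid x)

theorem swap_lt_swap_of_covBy {ι : Type*} [LinearOrder ι] {j j' i k : ι} (hcov : j ⋖ j')
    (hik : i < k) (hne : ¬(i = j ∧ k = j')) : swap j j' i < swap j j' k := by
  have hle := hcov.le_of_lt (c := i)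
  have hge := hcov.ge_of_gt (c := k)
  have := hcov.lt
  rw [swap_apply_def, swap_apply_def]
  split_ifs <;> grind

section SahiPerm

variable {n : ℕ} {α : Fin n → ℤ} {π π' : Perm (Fin n)}

theorem SahiPerm.unique (h : SahiPerm α π) (h' : SahiPerm α π') : π = π' :=
  Perm.eq_of_symm_lt_symm_iff fun i k hik => (h i k hik).trans (h' i k hik).symm

theorem SahiPerm.comp_swap {j j' : Fin n} (h : SahiPerm α π) (hcov : j ⋖ j')
    (hα : α j ≠ α j') : SahiPerm (α ∘ swap j j') (π.trans (swap j j')) := by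
  intro i k hik
  simp only [comp_apply, symm_trans_apply, symm_swap]
  by_cases hjj : i = j ∧ k = j'
  · obtain ⟨rfl, rfl⟩ := hjj
    rw [swap_apply_left, swap_apply_right, ← not_iff_not, not_lt,
      le_iff_lt_or_eq, π.symm.injective.eq_iff, h i k hik]
    -- for distinct values exactly one of the two orders satisfies the Sahi condition
    omega
  · exact h _ _ (swap_lt_swap_of_covBy hcov hik hjj)

theorem SahiPerm.update_neg {j : Fin n} (h : SahiPerm α π) (hj : IsTop j) :
    SahiPerm (update α j (-α j)) π := by
  intro i k hik
  have hi : i ≠ j := (hik.trans_le (hj k)).ne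
  rw [h i k hik, update_of_ne hi]
  rcases eq_or_ne k j with rfl | hk
  · rw [update_self]; omega
  · rw [update_of_ne hk]

end SahiPerm

theorem ptbarA_comp {n : ℕ} (q : ℂ) (τ : Fin n → ℂ) (α : Fin n → ℤ) (π σ : Perm (Fin n)) :
    ptbarA q τ (α ∘ σ) (π.trans σ.symm) = ptbarA q τ α π ∘ σ := by
  funext i
  simp [ptbarA]

theorem ptbarA_update_neg {n : ℕ} (q : ℂ) (τ : Fin n → ℂ) {α : Fin n → ℤ} {j : Fin n}
    (π : Perm (Fin n)) (hj : α j ≠ 0) :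
    ptbarA q τ (update α j (-α j)) π = update (ptbarA q τ α π) j (ptbarA q τ α π j)⁻¹ := by
  funext i
  rcases eq_or_ne i j with rfl | hi
  · rcases hj.lt_or_gt with hneg | hpos
    · simp [ptbarA, hneg.not_ge, hneg.le, zpow_neg, mul_comm]
    · simp [ptbarA, hpos.le, hpos.not_ge, zpow_neg, mul_comm]
  · simp [ptbarA, update_of_ne hi]

theorem stmt11_general {n : ℕ} (q : ℂ)
    (τ : Fin n → ℂ) (α : Fin n → ℤ) (j : Fin n)
    (πa πb : Equiv.Perm (Fin n)) (ha : SahiPerm α πa) (hb : SahiPerm (sjZ j α) πb)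
    (hne : sjZ j α ≠ α) :
    sjC j (ptbarA q τ α πa) = ptbarA q τ (sjZ j α) πb := by
  unfold sjZ sjC at *
  split_ifs at * with h
  · set j' : Fin n := ⟨j + 1, h⟩
    have hcov : j ⋖ j' := ⟨Fin.lt_def.2 (Nat.lt_succ_self _),
      fun c h₁ h₂ => by rw [Fin.lt_def] at h₁ h₂; simp only [j'] at h₂; omega⟩
    have hα : α j ≠ α j' := fun hjj => hne (funext (apply_swap_eq_self hjj))
    have hcomp := ptbarA_comp q τ α πa (swap j j')
    rw [symm_swap] at hcomp
    rw [hb.unique (ha.comp_swap hcov hα), hcomp]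
  · have htop : IsTop j := fun k => Fin.le_def.2 (by omega)
    have hα : α j ≠ 0 := fun h0 => hne (by rw [h0, neg_zero, ← h0, update_eq_self])
    rw [hb.unique (ha.update_neg htop), ptbarA_update_neg q τ πa hα]

/-- If `s_j α ≠ α` then `𝐬_j ᾱ = (s_j α)‾`. -/
theorem stmt11 {n : ℕ} (q : ℂ) (hq0 : 0 < ‖q‖) (hq1 : ‖q‖ < 1)
    (τ : Fin n → ℂ) (hτ : TauChain τ) (α : Fin n → ℤ) (j : Fin n)
    (πa πb : Equiv.Perm (Fin n)) (ha : SahiPerm α πa) (hb : SahiPerm (sjZ j α) πb)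
    (hne : sjZ j α ≠ α) :
    sjC j (ptbarA q τ α πa) = ptbarA q τ (sjZ j α) πb :=
  stmt11_general q τ α j πa πb ha hb hne
end
end

section
/- Let $0 < |q| < 1$ and $\tau \in \mathbb{C}^n$ with $0 < |\tau_1| < \cdots < |\tau_n| < 1$. The map $\mathbb{Z}^n \to (\mathbb{C}^*)^n$, $\alpha \mapsto \overline{\alpha}$, where $\overline{\alpha}_i := q^{\alpha_i}(\tau_{\pi_\alpha^{-1}(i)})^{\mathrm{sgn}(\alpha_i)}$ with $\pi_\alpha$ the Sahi permutation of $\alpha$, is injective. -/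
/-!
The point `ᾱ` determines `α`. Writing `ᾱᵢ = q^{αᵢ} t^{±1}` with `t = τ_{π⁻¹(i)}`, we get
`log |ᾱᵢ| = αᵢ log |q| ± log |t|`, which is negative exactly when `αᵢ ≥ 0`, and whose absolute
value is the height `|αᵢ| (-log |q|) - log |t|`. Along `π_α` the weights `|αᵢ|` decrease weakly
and `-log |τ_k|` decreases strictly, so the heights decrease strictly along `π_α`. Hence the
heights of `ᾱ` recover `π_α`, then `|αᵢ|`, and the sign of `log |ᾱᵢ|` recovers the sign of `αᵢ`.
-/

noncomputable section

theorem Equiv.Perm.eq_of_strictAnti_comp {n : ℕ} {β : Type*} [PartialOrder β] {f : Fin n → β}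
    {σ ρ : Equiv.Perm (Fin n)} (hσ : StrictAnti (f ∘ σ)) (hρ : StrictAnti (f ∘ ρ)) :
    σ = ρ := by
  have hfg : f ∘ σ = f ∘ ρ := Tuple.unique_antitone hσ.antitone hρ.antitone
  have hf : Function.Injective f := by
    simpa [Function.comp_assoc] using hσ.injective.comp σ.symm.injective
  exact Equiv.ext fun k => hf (congrFun hfg k)

theorem SahiPerm.natAbs_le {n : ℕ} {α : Fin n → ℤ} {π : Equiv.Perm (Fin n)} (h : SahiPerm α π)
    {i j : Fin n} (hij : π.symm i < π.symm j) : (α j).natAbs ≤ (α i).natAbs := by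
  rcases lt_trichotomy i j with hlt | rfl | hgt
  · rcases (h i j hlt).mp hij with hlt' | ⟨-, heq | heq⟩ <;> omega
  · exact absurd hij (lt_irrefl _)
  · by_contra! hle
    exact lt_asymm hij ((h j i hgt).mpr (Or.inl hle))

section ZpowMulIte

variable {𝕜 : Type*} [NormedDivisionRing 𝕜] {q t : 𝕜}

theorem log_norm_zpow_mul_ite (hq : q ≠ 0) (ht : t ≠ 0) (a : ℤ) :
    Real.log ‖q ^ a * (if 0 ≤ a then t else t⁻¹)‖
      = a * Real.log ‖q‖ + (if 0 ≤ a then Real.log ‖t‖ else -Real.log ‖t‖) := by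
  split_ifs <;>
    simp [norm_mul, norm_zpow, norm_inv, Real.log_mul, Real.log_zpow, Real.log_inv, hq, ht,
      zpow_ne_zero]

variable (hq0 : 0 < ‖q‖) (hq1 : ‖q‖ ≤ 1) (ht0 : 0 < ‖t‖) (ht1 : ‖t‖ < 1)
include hq0 hq1 ht0 ht1

theorem log_norm_zpow_mul_ite_neg_iff (a : ℤ) :
    Real.log ‖q ^ a * (if 0 ≤ a then t else t⁻¹)‖ < 0 ↔ 0 ≤ a := by
  rw [log_norm_zpow_mul_ite (norm_pos_iff.mp hq0) (norm_pos_iff.mp ht0)]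
  have hu : Real.log ‖q‖ ≤ 0 := Real.log_nonpos hq0.le hq1
  have hv : Real.log ‖t‖ < 0 := Real.log_neg ht0 ht1
  by_cases ha : 0 ≤ a
  · have : (a : ℝ) * Real.log ‖q‖ ≤ 0 := mul_nonpos_of_nonneg_of_nonpos (by exact_mod_cast ha) hu
    simp only [ha, if_true, iff_true]
    linarith
  · have : 0 ≤ (a : ℝ) * Real.log ‖q‖ :=
      mul_nonneg_of_nonpos_of_nonpos (by exact_mod_cast (not_le.mp ha).le) hu
    simp only [ha, if_false, iff_false, not_lt]
    linarith

theorem abs_log_norm_zpow_mul_ite (a : ℤ) :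
    |Real.log ‖q ^ a * (if 0 ≤ a then t else t⁻¹)‖| = a.natAbs * -Real.log ‖q‖ - Real.log ‖t‖ := by
  have hsign := log_norm_zpow_mul_ite_neg_iff hq0 hq1 ht0 ht1 a
  rw [log_norm_zpow_mul_ite (norm_pos_iff.mp hq0) (norm_pos_iff.mp ht0)] at hsign ⊢
  have hcast : (a.natAbs : ℝ) = |(a : ℝ)| := by rw [Nat.cast_natAbs, Int.cast_abs]
  by_cases ha : 0 ≤ a
  · rw [if_pos ha] at hsign ⊢
    rw [abs_of_neg (hsign.mpr ha), hcast, abs_of_nonneg (by exact_mod_cast ha)]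
    ring
  · rw [if_neg ha] at hsign ⊢
    rw [abs_of_nonneg (not_lt.mp (mt hsign.mp ha)), hcast,
      abs_of_neg (by exact_mod_cast not_le.mp ha)]
    ring

end ZpowMulIte

section Ptbar

variable {n : ℕ} {q : ℂ} {τ : Fin n → ℂ} (hq0 : 0 < ‖q‖) (hq1 : ‖q‖ ≤ 1) (hτ : TauChain τ)
include hq0 hq1 hτ

theorem log_norm_ptbarA_neg_iff (α : Fin n → ℤ) (π : Equiv.Perm (Fin n)) (i : Fin n) :
    Real.log ‖ptbarA q τ α π i‖ < 0 ↔ 0 ≤ α i :=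
  log_norm_zpow_mul_ite_neg_iff hq0 hq1 (hτ.1 _) (hτ.2.2 _) (α i)

theorem abs_log_norm_ptbarA (α : Fin n → ℤ) (π : Equiv.Perm (Fin n)) (i : Fin n) :
    |Real.log ‖ptbarA q τ α π i‖| = (α i).natAbs * -Real.log ‖q‖ - Real.log ‖τ (π.symm i)‖ :=
  abs_log_norm_zpow_mul_ite hq0 hq1 (hτ.1 _) (hτ.2.2 _) (α i)

theorem strictAnti_abs_log_norm_ptbarA_comp {α : Fin n → ℤ} {π : Equiv.Perm (Fin n)}
    (hα : SahiPerm α π) : StrictAnti ((fun i => |Real.log ‖ptbarA q τ α π i‖|) ∘ π) := by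
  intro k l hkl
  have hweight : (α (π l)).natAbs ≤ (α (π k)).natAbs := hα.natAbs_le (by simpa using hkl)
  have hτkl : Real.log ‖τ k‖ < Real.log ‖τ l‖ := Real.log_lt_log (hτ.1 k) (hτ.2.1 hkl)
  have hL : 0 ≤ -Real.log ‖q‖ := neg_nonneg.mpr (Real.log_nonpos hq0.le hq1)
  simp only [Function.comp_apply, abs_log_norm_ptbarA hq0 hq1 hτ, Equiv.symm_apply_apply]
  have : ((α (π l)).natAbs : ℝ) * -Real.log ‖q‖ ≤ (α (π k)).natAbs * -Real.log ‖q‖ := by gcongr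
  linarith

end Ptbar

/-- The map `α ↦ ᾱ` from `ℤⁿ` to `(ℂ*)ⁿ` is injective. -/
theorem stmt13 {n : ℕ} (q : ℂ) (hq0 : 0 < ‖q‖) (hq1 : ‖q‖ < 1)
    (τ : Fin n → ℂ) (hτ : TauChain τ) (α β : Fin n → ℤ)
    (πa πb : Equiv.Perm (Fin n)) (ha : SahiPerm α πa) (hb : SahiPerm β πb)
    (h : ptbarA q τ α πa = ptbarA q τ β πb) : α = β := by
  have hπ : πa = πb := Equiv.Perm.eq_of_strictAnti_comp
    (strictAnti_abs_log_norm_ptbarA_comp hq0 hq1.le hτ ha)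
    (h ▸ strictAnti_abs_log_norm_ptbarA_comp hq0 hq1.le hτ hb)
  subst hπ
  funext i
  have hsign : 0 ≤ α i ↔ 0 ≤ β i := by
    rw [← log_norm_ptbarA_neg_iff hq0 hq1.le hτ α πa i, h,
      log_norm_ptbarA_neg_iff hq0 hq1.le hτ β πa i]
  have hheight := congrArg (fun x => |Real.log ‖x i‖|) h
  simp only [abs_log_norm_ptbarA hq0 hq1.le hτ, sub_left_inj] at hheight
  have hL : -Real.log ‖q‖ ≠ 0 := (neg_pos.mpr (Real.log_neg hq0 hq1)).ne'
  have hweight : (α i).natAbs = (β i).natAbs := by exact_mod_cast mul_right_cancel₀ hL hheight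
  omega
end
end

section
/- Let $0 < |q| < 1$ and $\tau \in \mathbb{C}^n$ with $0 < |\tau_1| < \cdots < |\tau_n| < 1$. For every $\alpha \in \mathbb{Z}^n$ and every root $\beta$ of the root system $B_n$ (i.e., $\beta = \pm e_i \pm e_j$ with $i \ne j$, or $\beta = \pm e_i$), the evaluation $\overline{\alpha}^{\,\beta} := \prod_i \overline{\alpha}_i^{\beta_i}$ satisfies $|\overline{\alpha}^{\,\beta}| \ne 1$. -/
noncomputable section

/-- `β ∈ ℤⁿ` is a root of the root system `Bₙ`: `β = ±eᵢ` or `β = ±eᵢ ± eⱼ` (`i ≠ j`). -/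
def IsBRoot {n : ℕ} (β : Fin n → ℤ) : Prop :=
  (∃ (i : Fin n) (a : ℤ), (a = 1 ∨ a = -1) ∧ β = fun k => if k = i then a else 0) ∨
  (∃ (i j : Fin n), i ≠ j ∧ ∃ a b : ℤ, (a = 1 ∨ a = -1) ∧ (b = 1 ∨ b = -1) ∧
    β = fun k => if k = i then a else if k = j then b else 0)

/-! `‖ᾱᵢ‖ = rᵢ^{±1}` with `rᵢ = ‖q‖^{|αᵢ|} ‖τ_{π⁻¹(i)}‖ ∈ (0,1)`. The Sahi permutation makes
`i ↦ rᵢ` injective: equal `|αᵢ|` are separated by the distinct `‖τ‖`, unequal ones by the powers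
of `‖q‖`, since the larger `|αᵢ|` is paired with the smaller `‖τ‖`. Hence `‖ᾱ^β‖` is `rᵢ^{±1}` or
`rᵢ^{±1} rⱼ^{±1}` with `rᵢ ≠ rⱼ`, and neither can be `1`. -/

section Products

variable {ι M : Type*} [Fintype ι] [DecidableEq ι] [DivisionCommMonoid M]

lemma prod_zpow_ite_single (f : ι → M) (i : ι) (a : ℤ) :
    ∏ k, f k ^ (if k = i then a else 0) = f i ^ a := by
  rw [Fintype.prod_eq_single i fun k hk => by simp [hk]]
  simp

lemma prod_zpow_ite_pair (f : ι → M) {i j : ι} (hij : i ≠ j) (a b : ℤ) :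
    ∏ k, f k ^ (if k = i then a else if k = j then b else 0) = f i ^ a * f j ^ b := by
  rw [Fintype.prod_eq_mul i j hij fun k ⟨hki, hkj⟩ => by simp [hki, hkj]]
  simp [hij.symm]

end Products

lemma zpow_mul_zpow_ne_one {K : Type*} [Field K] [LinearOrder K] [IsStrictOrderedRing K]
    {r s : K} (hr0 : 0 < r) (hr1 : r < 1) (hs0 : 0 < s) (hs1 : s < 1) (hrs : r ≠ s)
    {e f : ℤ} (he : IsUnit e) (hf : IsUnit f) : r ^ e * s ^ f ≠ 1 := by
  rcases Int.isUnit_iff.mp he with rfl | rfl <;> rcases Int.isUnit_iff.mp hf with rfl | rfl <;>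
    simp only [zpow_one, zpow_neg, ne_eq]
  · nlinarith
  · rw [mul_inv_eq_one₀ hs0.ne']; exact hrs
  · rw [inv_mul_eq_one₀ hr0.ne']; exact hrs
  · rw [← mul_inv, inv_eq_one]; nlinarith

lemma SahiPerm.symm_lt_symm {n : ℕ} {α : Fin n → ℤ} {π : Equiv.Perm (Fin n)}
    (hπ : SahiPerm α π) {i j : Fin n} (h : (α j).natAbs < (α i).natAbs) :
    π.symm i < π.symm j := by
  have hij : i ≠ j := ne_of_apply_ne (fun k => (α k).natAbs) h.ne'
  rcases hij.lt_or_gt with hlt | hgt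
  · exact (hπ i j hlt).mpr (Or.inl h)
  · refine lt_of_le_of_ne (not_lt.mp ?_) (π.symm.injective.ne hij)
    rw [hπ j i hgt]
    rintro (h' | ⟨-, h' | h'⟩) <;> omega

def ptRadius {n : ℕ} (q : ℂ) (τ : Fin n → ℂ) (α : Fin n → ℤ) (π : Equiv.Perm (Fin n))
    (i : Fin n) : ℝ :=
  ‖q‖ ^ (α i).natAbs * ‖τ (π.symm i)‖

section Radius

variable {n : ℕ} {q : ℂ} {τ : Fin n → ℂ} {α : Fin n → ℤ} {π : Equiv.Perm (Fin n)}

variable (q τ α π) in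
lemma norm_ptbarA (i : Fin n) :
    ∃ s : ℤ, IsUnit s ∧ ‖ptbarA q τ α π i‖ = ptRadius q τ α π i ^ s := by
  by_cases h : 0 ≤ α i
  · refine ⟨1, isUnit_one, ?_⟩
    rw [ptbarA, if_pos h, norm_mul, norm_zpow, ← Int.natAbs_of_nonneg h, zpow_natCast,
      zpow_one, ptRadius]
  · refine ⟨-1, isUnit_one.neg, ?_⟩
    have hq : ‖q‖ ^ α i = (‖q‖ ^ (α i).natAbs)⁻¹ := by
      rw [← zpow_natCast, ← zpow_neg, Int.ofNat_natAbs_of_nonpos (by omega), neg_neg]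
    rw [ptbarA, if_neg h, norm_mul, norm_zpow, norm_inv, hq, ← mul_inv, zpow_neg_one, ptRadius]

lemma ptRadius_pos (hq0 : 0 < ‖q‖) (hτ : TauChain τ) (i : Fin n) : 0 < ptRadius q τ α π i :=
  mul_pos (pow_pos hq0 _) (hτ.1 _)

lemma ptRadius_lt_one (hq1 : ‖q‖ < 1) (hτ : TauChain τ) (i : Fin n) :
    ptRadius q τ α π i < 1 :=
  calc ptRadius q τ α π i ≤ ‖τ (π.symm i)‖ :=
        mul_le_of_le_one_left (hτ.1 _).le (pow_le_one₀ (norm_nonneg q) hq1.le)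
    _ < 1 := hτ.2.2 _

lemma ptRadius_lt_of_natAbs_lt (hq0 : 0 < ‖q‖) (hq1 : ‖q‖ < 1) (hτ : TauChain τ)
    (hπ : SahiPerm α π) {i j : Fin n} (h : (α j).natAbs < (α i).natAbs) :
    ptRadius q τ α π i < ptRadius q τ α π j :=
  mul_lt_mul'' (pow_lt_pow_right_of_lt_one₀ hq0 hq1 h) (hτ.2.1 (hπ.symm_lt_symm h))
    (pow_nonneg hq0.le _) (hτ.1 _).le

lemma ptRadius_injective (hq0 : 0 < ‖q‖) (hq1 : ‖q‖ < 1) (hτ : TauChain τ)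
    (hπ : SahiPerm α π) : Function.Injective (ptRadius q τ α π) := by
  intro i j hr
  by_contra hij
  rcases lt_trichotomy (α i).natAbs (α j).natAbs with h | h | h
  · exact (ptRadius_lt_of_natAbs_lt hq0 hq1 hτ hπ h).ne' hr
  · rw [ptRadius, ptRadius, h] at hr
    exact hij (π.symm.injective (hτ.2.1.injective (mul_left_cancel₀ (pow_pos hq0 _).ne' hr)))
  · exact (ptRadius_lt_of_natAbs_lt hq0 hq1 hτ hπ h).ne hr

end Radius

/-- For every `α ∈ ℤⁿ` and every root `β` of `Bₙ`, `|ᾱ^β| ≠ 1`. -/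
theorem stmt14 {n : ℕ} (q : ℂ) (hq0 : 0 < ‖q‖) (hq1 : ‖q‖ < 1)
    (τ : Fin n → ℂ) (hτ : TauChain τ) (α : Fin n → ℤ)
    (π : Equiv.Perm (Fin n)) (hπ : SahiPerm α π) (β : Fin n → ℤ) (hβ : IsBRoot β) :
    ‖∏ i, ptbarA q τ α π i ^ β i‖ ≠ 1 := by
  have hr0 (i : Fin n) : 0 < ptRadius q τ α π i := ptRadius_pos hq0 hτ i
  have hr1 (i : Fin n) : ptRadius q τ α π i < 1 := ptRadius_lt_one hq1 hτ i
  simp_rw [norm_prod, norm_zpow]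
  rcases hβ with ⟨i, a, ha, rfl⟩ | ⟨i, j, hij, a, b, ha, hb, rfl⟩
  · obtain ⟨s, hs, hsi⟩ := norm_ptbarA q τ α π i
    rw [prod_zpow_ite_single, hsi, ← zpow_mul, ne_eq,
      zpow_eq_one_iff_right₀ (hr0 i).le (hr1 i).ne]
    exact (hs.mul (Int.isUnit_iff.mpr ha)).ne_zero
  · obtain ⟨s, hs, hsi⟩ := norm_ptbarA q τ α π i
    obtain ⟨t, ht, htj⟩ := norm_ptbarA q τ α π j
    rw [prod_zpow_ite_pair _ hij, hsi, htj, ← zpow_mul, ← zpow_mul]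
    exact zpow_mul_zpow_ne_one (hr0 i) (hr1 i) (hr0 j) (hr1 j)
      ((ptRadius_injective hq0 hq1 hτ hπ).ne hij) (hs.mul (Int.isUnit_iff.mpr ha))
      (ht.mul (Int.isUnit_iff.mpr hb))
end
end
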